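/- arXiv:1710.08260 — 8 statements merged into one kernel-verified Lean document; each statement's English description precedes it below -/
import Mathlib

section
/- Let φ be regularly varying of index −1 (so φ^β is regularly varying of index −β). For every α > β, lim_{n→∞} (∑_{k=1}^n 2^{kα} φ(2^k)^β) / (2^{nα} φ(2^n)^β) = 2^{α−β}/(2^{α−β}−1). -/
/-!
Put `a k = 2^{kα} φ(2^k)^β`. Regular variation at `λ = 2` gives `a (k+1) / a k → r := 2^{α-β} > 1`.
The normalised partial sums `b n = (∑_{k ≤ n} a k) / a n` obey `b (n+1) = (a n / a (n+1)) b n + 1`,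
a recursion whose coefficient tends to `r⁻¹ < 1`; its limiting map `x ↦ r⁻¹ x + 1` is a contraction
with fixed point `r / (r - 1)`, so the errors `|b n - r / (r - 1)|` satisfy `e (n+1) ≤ q e n + o(1)`
with `q < 1` and hence tend to `0`.
-/

open Filter Finset Topology

lemma tendsto_zero_of_le_mul_add {u δ : ℕ → ℝ} {q : ℝ} (hq₀ : 0 ≤ q) (hq : q < 1)
    (hu : ∀ n, 0 ≤ u n) (hδ : Tendsto δ atTop (𝓝 0))
    (hrec : ∀ᶠ n in atTop, u (n + 1) ≤ q * u n + δ n) :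
    Tendsto u atTop (𝓝 0) := by
  refine tendsto_order.2 ⟨fun a ha => .of_forall fun n => ha.trans_le (hu n), fun ε hε => ?_⟩
  have hη : 0 < (1 - q) * (ε / 2) := by have := sub_pos.2 hq; positivity
  obtain ⟨N, hN⟩ := eventually_atTop.1 (hrec.and (hδ.eventually (ge_mem_nhds hη)))
  -- Past `N`, the excess of `u` over `ε / 2` contracts by the factor `q`.
  have hgeom : ∀ k, u (N + k) - ε / 2 ≤ q ^ k * (u N - ε / 2) := by
    refine fun k => le_geom (u := fun k => u (N + k) - ε / 2) hq₀ k fun i _ => ?_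
    obtain ⟨hstep, hsmall⟩ := hN (N + i) (by omega)
    rw [← add_assoc]
    linarith
  have hlim : Tendsto (fun k => q ^ k * (u N - ε / 2)) atTop (𝓝 0) := by
    simpa using (tendsto_pow_atTop_nhds_zero_of_lt_one hq₀ hq).mul_const (u N - ε / 2)
  filter_upwards [tendsto_sub_atTop_nat N |>.eventually (hlim.eventually (gt_mem_nhds
    (half_pos hε))), eventually_ge_atTop N] with n hn hNn
  have := hgeom (n - N)
  rw [Nat.add_sub_cancel' hNn] at this
  linarith

theorem tendsto_sum_Icc_div_of_tendsto_ratio {a : ℕ → ℝ} {r : ℝ} (ha : ∀ n, 0 < a n)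
    (hr : 1 < r) (hlim : Tendsto (fun n => a (n + 1) / a n) atTop (𝓝 r)) :
    Tendsto (fun n => (∑ k ∈ Icc 1 n, a k) / a n) atTop (𝓝 (r / (r - 1))) := by
  set L := r / (r - 1) with hL_def
  set b := fun n => (∑ k ∈ Icc 1 n, a k) / a n
  set ρ := fun n => a n / a (n + 1)
  have hr₀ : 0 < r := one_pos.trans hr
  have hρ : Tendsto ρ atTop (𝓝 r⁻¹) := by
    simpa only [ρ, inv_div] using hlim.inv₀ hr₀.ne'
  have hL : 0 ≤ L := div_nonneg hr₀.le (sub_pos.2 hr).le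
  have hb_succ : ∀ n, b (n + 1) - L = ρ n * (b n - L) + L * (ρ n - r⁻¹) := by
    intro n
    have h₁ := (ha n).ne'
    have h₂ := (ha (n + 1)).ne'
    have h₃ := (sub_pos.2 hr).ne'
    simp only [b, ρ, hL_def, sum_Icc_succ_top (Nat.le_add_left 1 n)]
    field_simp
    ring
  set q := (1 + r⁻¹) / 2
  have hrq : r⁻¹ < q := by have := inv_lt_one_of_one_lt₀ hr; simp only [q]; linarith
  have hq : q < 1 := by have := inv_lt_one_of_one_lt₀ hr; simp only [q]; linarith
  have hδ : Tendsto (fun n => L * |ρ n - r⁻¹|) atTop (𝓝 0) := by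
    simpa using ((hρ.sub_const r⁻¹).abs.const_mul L)
  rw [← tendsto_sub_nhds_zero_iff, tendsto_zero_iff_abs_tendsto_zero]
  refine tendsto_zero_of_le_mul_add (by positivity) hq (fun n => abs_nonneg _) hδ ?_
  filter_upwards [hρ.eventually (ge_mem_nhds hrq)] with n hρq
  have hρ₀ : 0 ≤ ρ n := div_nonneg (ha n).le (ha (n + 1)).le
  calc |b (n + 1) - L| ≤ ρ n * |b n - L| + L * |ρ n - r⁻¹| := by
        rw [hb_succ, ← abs_of_nonneg hρ₀, ← abs_of_nonneg hL, ← abs_mul, ← abs_mul,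
          abs_of_nonneg hρ₀, abs_of_nonneg hL]
        exact abs_add_le _ _
    _ ≤ q * |b n - L| + L * |ρ n - r⁻¹| := by gcongr

theorem tendsto_rpow_mul_rpow_succ_div {φ : ℝ → ℝ} {c : ℝ} (hc : 1 < c)
    (hpos : ∀ n : ℕ, 0 < φ (c ^ n)) (hφ : Tendsto (fun t => φ (c * t) / φ t) atTop (𝓝 c⁻¹))
    (α β : ℝ) :
    Tendsto (fun n : ℕ => c ^ (((n + 1 : ℕ) : ℝ) * α) * φ (c ^ (n + 1)) ^ β /
      (c ^ ((n : ℝ) * α) * φ (c ^ n) ^ β)) atTop (𝓝 (c ^ (α - β))) := by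
  have hc₀ : 0 < c := one_pos.trans hc
  have hφ_pow : Tendsto (fun n : ℕ => c ^ α * (φ (c * c ^ n) / φ (c ^ n)) ^ β) atTop
      (𝓝 (c ^ α * c⁻¹ ^ β)) :=
    ((hφ.comp (tendsto_pow_atTop_atTop_of_one_lt hc)).rpow_const
      (Or.inl (inv_pos.2 hc₀).ne')).const_mul _
  rw [Real.inv_rpow hc₀.le, ← div_eq_mul_inv, ← Real.rpow_sub hc₀] at hφ_pow
  refine hφ_pow.congr fun n => ?_
  rw [mul_div_mul_comm, ← Real.rpow_sub hc₀, ← Real.div_rpow (hpos _).le (hpos n).le, pow_succ']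
  congr 2
  push_cast
  ring

theorem discrete_karamata_sum_of_regularly_varying_general (φ : ℝ → ℝ)
    (hpos : ∀ t, 0 ≤ t → 0 < φ t)
    (hrv : ∀ l : ℝ, 0 < l →
      Tendsto (fun t => φ (l * t) / φ t) atTop (nhds l⁻¹))
    (α β : ℝ) (hαβ : β < α) :
    Tendsto
      (fun n : ℕ =>
        (∑ k ∈ Finset.Icc 1 n, (2 : ℝ) ^ ((k : ℝ) * α) * φ ((2 : ℝ) ^ k) ^ β) /
          ((2 : ℝ) ^ ((n : ℝ) * α) * φ ((2 : ℝ) ^ n) ^ β))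
      atTop
      (nhds ((2 : ℝ) ^ (α - β) / ((2 : ℝ) ^ (α - β) - 1))) := by
  have hφ : ∀ k : ℕ, 0 < φ (2 ^ k) := fun k => hpos _ (by positivity)
  exact tendsto_sum_Icc_div_of_tendsto_ratio
    (fun k => mul_pos (Real.rpow_pos_of_pos two_pos _) (Real.rpow_pos_of_pos (hφ k) β))
    (Real.one_lt_rpow one_lt_two (sub_pos.2 hαβ))
    (tendsto_rpow_mul_rpow_succ_div one_lt_two hφ (hrv 2 two_pos) α β)

/-- **Lemma (discrete Karamata, increasing case).** If `φ` is regularly varying of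
index `-1`, then for every `α > β`,
`(∑_{k=1}^n 2^{kα} φ(2^k)^β) / (2^{nα} φ(2^n)^β) → 2^{α-β}/(2^{α-β}-1)`. -/
theorem discrete_karamata_sum_of_regularly_varying (φ : ℝ → ℝ)
    (hpos : ∀ t, 0 ≤ t → 0 < φ t)
    (hmeas : Measurable φ)
    (hrv : ∀ l : ℝ, 0 < l →
      Tendsto (fun t => φ (l * t) / φ t) atTop (nhds l⁻¹))
    (α β : ℝ) (hαβ : β < α) :
    Tendsto
      (fun n : ℕ =>
        (∑ k ∈ Finset.Icc 1 n, (2 : ℝ) ^ ((k : ℝ) * α) * φ ((2 : ℝ) ^ k) ^ β) /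
          ((2 : ℝ) ^ ((n : ℝ) * α) * φ ((2 : ℝ) ^ n) ^ β))
      atTop
      (nhds ((2 : ℝ) ^ (α - β) / ((2 : ℝ) ^ (α - β) - 1))) :=
  discrete_karamata_sum_of_regularly_varying_general φ hpos hrv α β hαβ
end

section
/- Let φ be regularly varying of index −1. For every α < β, lim_{n→∞} (∑_{k=n}^∞ 2^{kα} φ(2^k)^β) / (2^{nα} φ(2^n)^β) = 1/(1 − 2^{α−β}), where in particular the series converges for large n. -/
open Filter Set

lemma geom_bound_upper (a : ℕ → ℝ) (ha : ∀ n, 0 < a n) (x : ℝ) (hx : 0 ≤ x) (n : ℕ)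
    (h : ∀ m, n ≤ m → a (m+1) / a m ≤ x) : ∀ k, a (n+k) ≤ a n * x^k := by
  intro k
  induction k with
  | zero => simp
  | succ k ih =>
    have h1 : a (n+k+1) / a (n+k) ≤ x := h (n+k) (Nat.le_add_right _ _)
    have h2 : a (n+k+1) ≤ a (n+k) * x := by have := (div_le_iff₀ (ha (n+k))).mp h1; linarith [this]
    calc a (n+(k+1)) = a (n+k+1) := by ring_nf
      _ ≤ a (n+k) * x := h2
      _ ≤ (a n * x^k) * x := by
          exact mul_le_mul_of_nonneg_right ih hx
      _ = a n * x^(k+1) := by ring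

lemma geom_bound_lower (a : ℕ → ℝ) (ha : ∀ n, 0 < a n) (x : ℝ) (hx : 0 ≤ x) (n : ℕ)
    (h : ∀ m, n ≤ m → x ≤ a (m+1) / a m) : ∀ k, a n * x^k ≤ a (n+k) := by
  intro k
  induction k with
  | zero => simp
  | succ k ih =>
    have h1 : x ≤ a (n+k+1) / a (n+k) := h (n+k) (Nat.le_add_right _ _)
    have h2 : a (n+k) * x ≤ a (n+k+1) := by have := (le_div_iff₀ (ha (n+k))).mp h1; linarith [this]
    calc a n * x^(k+1) = (a n * x^k) * x := by ring
      _ ≤ a (n+k) * x := mul_le_mul_of_nonneg_right ih hx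
      _ ≤ a (n+(k+1)) := by rw [show n+(k+1) = n+k+1 from rfl]; exact h2

lemma tail_summable (a : ℕ → ℝ) (ha : ∀ n, 0 < a n) (x : ℝ) (hx0 : 0 ≤ x) (hx1 : x < 1)
    (n : ℕ) (h : ∀ m, n ≤ m → a (m+1) / a m ≤ x) :
    Summable (fun k => a (n+k)) := by
  apply Summable.of_nonneg_of_le (fun k => (ha _).le)
    (geom_bound_upper a ha x hx0 n h)
  exact (summable_geometric_of_lt_one hx0 hx1).mul_left _

lemma tail_ratio (a : ℕ → ℝ) (ha : ∀ n, 0 < a n) {q : ℝ} (hq0 : 0 < q) (hq1 : q < 1)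
    (hr : Tendsto (fun n => a (n+1) / a n) atTop (nhds q)) :
    (∀ᶠ n in atTop, Summable (fun k => a (n+k))) ∧
    Tendsto (fun n => (∑' k, a (n+k)) / a n) atTop (nhds (1/(1-q))) := by
  constructor
  · have hev : ∀ᶠ m in atTop, a (m+1) / a m ≤ (q+1)/2 :=
      (hr.eventually_le_const (by linarith)).mono fun m hm => hm
    rw [eventually_atTop] at hev ⊢
    obtain ⟨N, hN⟩ := hev
    exact ⟨N, fun n hn => tail_summable a ha _ (by linarith) (by linarith) n
      (fun m hm => hN m (le_trans hn hm))⟩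
  · rw [Metric.tendsto_atTop]
    intro ε hε
    have hf : ContinuousAt (fun x : ℝ => 1/(1-x)) q := by
      apply ContinuousAt.div continuousAt_const (by fun_prop)
      intro h; linarith [h]
    rw [Metric.continuousAt_iff] at hf
    obtain ⟨δ, hδ, hfδ⟩ := hf ε hε
    set δ₁ := min (δ/2) (min (q/2) ((1-q)/2)) with hδ₁def
    have hδ₁pos : 0 < δ₁ := by
      apply lt_min (by linarith) (lt_min (by linarith) (by linarith))
    have hδ₁a : δ₁ ≤ δ/2 := min_le_left _ _
    have hδ₁b : δ₁ ≤ q/2 := le_trans (min_le_right _ _) (min_le_left _ _)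
    have hδ₁c : δ₁ ≤ (1-q)/2 := le_trans (min_le_right _ _) (min_le_right _ _)
    have hql : 0 < q - δ₁ := by linarith
    have hqu : q + δ₁ < 1 := by linarith
    have hfu : |(1/(1-(q+δ₁))) - 1/(1-q)| < ε := by
      have := hfδ (x := q + δ₁) (by rw [Real.dist_eq]; rw [abs_of_pos] <;> linarith)
      rwa [Real.dist_eq] at this
    have hfl : |(1/(1-(q-δ₁))) - 1/(1-q)| < ε := by
      have := hfδ (x := q - δ₁) (by rw [Real.dist_eq]; rw [abs_of_nonpos] <;> linarith)
      rwa [Real.dist_eq] at this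
    have hev : ∀ᶠ m in atTop, dist (a (m+1) / a m) q < δ₁ :=
      hr (Metric.ball_mem_nhds q hδ₁pos)
    rw [eventually_atTop] at hev
    obtain ⟨N, hN⟩ := hev
    refine ⟨N, fun n hn => ?_⟩
    have hub : ∀ m, n ≤ m → a (m+1) / a m ≤ q + δ₁ := by
      intro m hm
      have := hN m (le_trans hn hm)
      rw [Real.dist_eq, abs_lt] at this
      linarith [this.2]
    have hlb : ∀ m, n ≤ m → q - δ₁ ≤ a (m+1) / a m := by
      intro m hm
      have := hN m (le_trans hn hm)
      rw [Real.dist_eq, abs_lt] at this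
      linarith [this.1]
    have hsum : Summable (fun k => a (n+k)) :=
      tail_summable a ha _ (by linarith) hqu n hub
    have hgeomu : Summable (fun k : ℕ => a n * (q+δ₁)^k) :=
      (summable_geometric_of_lt_one (by linarith) hqu).mul_left _
    have hgeoml : Summable (fun k : ℕ => a n * (q-δ₁)^k) :=
      (summable_geometric_of_lt_one (by linarith) (by linarith)).mul_left _
    have hSu : (∑' k, a (n+k)) ≤ a n * (1-(q+δ₁))⁻¹ := by
      calc (∑' k, a (n+k)) ≤ ∑' k : ℕ, a n * (q+δ₁)^k :=
            Summable.tsum_le_tsum (geom_bound_upper a ha _ (by linarith) n hub) hsum hgeomu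
        _ = a n * (1-(q+δ₁))⁻¹ := by
            rw [tsum_mul_left, tsum_geometric_of_lt_one (by linarith) hqu]
    have hSl : a n * (1-(q-δ₁))⁻¹ ≤ ∑' k, a (n+k) := by
      calc a n * (1-(q-δ₁))⁻¹ = ∑' k : ℕ, a n * (q-δ₁)^k := by
            rw [tsum_mul_left, tsum_geometric_of_lt_one (by linarith) (by linarith)]
        _ ≤ ∑' k, a (n+k) :=
            Summable.tsum_le_tsum (geom_bound_lower a ha _ (by linarith) n hlb) hgeoml hsum
    have han := ha n
    have h1 : (∑' k, a (n+k)) / a n ≤ (1-(q+δ₁))⁻¹ := by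
      rw [div_le_iff₀ han]; linarith [hSu]
    have h2 : (1-(q-δ₁))⁻¹ ≤ (∑' k, a (n+k)) / a n := by
      rw [le_div_iff₀ han]; linarith [hSl]
    rw [Real.dist_eq, abs_lt]
    rw [abs_lt] at hfu hfl
    constructor
    · have : (1:ℝ)/(1-(q-δ₁)) = (1-(q-δ₁))⁻¹ := one_div _
      rw [this] at hfl
      linarith [hfl.2]
    · have : (1:ℝ)/(1-(q+δ₁)) = (1-(q+δ₁))⁻¹ := one_div _
      rw [this] at hfu
      linarith [hfu.1]

/-- **Lemma (discrete Karamata, tail case).** If `φ` is regularly varying of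
index `-1`, then for every `α < β` the tail series `∑_{k=n}^∞ 2^{kα} φ(2^k)^β`
converges for large `n` and
`(∑_{k=n}^∞ 2^{kα} φ(2^k)^β) / (2^{nα} φ(2^n)^β) → 1/(1 - 2^{α-β})`. -/
theorem discrete_karamata_tail_of_regularly_varying (φ : ℝ → ℝ)
    (hpos : ∀ t, 0 ≤ t → 0 < φ t)
    (hmeas : Measurable φ)
    (hrv : ∀ l : ℝ, 0 < l →
      Tendsto (fun t => φ (l * t) / φ t) atTop (nhds l⁻¹))
    (α β : ℝ) (hαβ : α < β) :
    (∀ᶠ n : ℕ in atTop,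
      Summable (fun k : ℕ =>
        (2 : ℝ) ^ (((n + k : ℕ) : ℝ) * α) * φ ((2 : ℝ) ^ (n + k)) ^ β)) ∧
    Tendsto
      (fun n : ℕ =>
        (∑' k : ℕ, (2 : ℝ) ^ (((n + k : ℕ) : ℝ) * α) * φ ((2 : ℝ) ^ (n + k)) ^ β) /
          ((2 : ℝ) ^ ((n : ℝ) * α) * φ ((2 : ℝ) ^ n) ^ β))
      atTop
      (nhds (1 / (1 - (2 : ℝ) ^ (α - β)))) := by
  set a : ℕ → ℝ := fun m => (2:ℝ) ^ ((m:ℝ) * α) * φ ((2:ℝ)^m) ^ β with ha_def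
  have hφpos : ∀ m : ℕ, 0 < φ ((2:ℝ)^m) := fun m => hpos _ (by positivity)
  have ha : ∀ m, 0 < a m := fun m =>
    mul_pos (Real.rpow_pos_of_pos two_pos _) (Real.rpow_pos_of_pos (hφpos m) _)
  -- ratio tends to 2^(α-β)
  have hpow : Tendsto (fun n : ℕ => (2:ℝ)^n) atTop atTop :=
    tendsto_pow_atTop_atTop_of_one_lt one_lt_two
  have hc : Tendsto (fun n : ℕ => φ ((2:ℝ)^(n+1)) / φ ((2:ℝ)^n)) atTop (nhds 2⁻¹) := by
    have h2 := (hrv 2 two_pos).comp hpow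
    convert h2 using 2 with n
    · rw [Function.comp]; ring_nf
  have hcβ : Tendsto (fun n : ℕ => (φ ((2:ℝ)^(n+1)) / φ ((2:ℝ)^n)) ^ β) atTop
      (nhds ((2:ℝ)⁻¹ ^ β)) :=
    hc.rpow_const (Or.inl (by norm_num))
  have hr : Tendsto (fun n => a (n+1) / a n) atTop (nhds ((2:ℝ) ^ (α - β))) := by
    have h := hcβ.const_mul ((2:ℝ) ^ α)
    have heq : (fun n : ℕ => (2:ℝ) ^ α * (φ ((2:ℝ)^(n+1)) / φ ((2:ℝ)^n)) ^ β)
        = fun n => a (n+1) / a n := by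
      funext n
      rw [ha_def]
      dsimp only
      rw [mul_div_mul_comm, ← Real.rpow_sub two_pos,
        ← Real.div_rpow (hφpos (n+1)).le (hφpos n).le]
      congr 1
      push_cast
      ring_nf
    have hval : (2:ℝ) ^ α * (2:ℝ)⁻¹ ^ β = (2:ℝ) ^ (α - β) := by
      have h1 : (2:ℝ)⁻¹ ^ β = (2:ℝ) ^ (-β) := by
        rw [Real.rpow_neg (by norm_num), Real.inv_rpow (by norm_num)]
      rw [h1, ← Real.rpow_add two_pos]
      ring_nf
    rw [heq] at h
    rwa [hval] at h
  have hq0 : (0:ℝ) < (2:ℝ) ^ (α - β) := Real.rpow_pos_of_pos two_pos _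
  have hq1 : (2:ℝ) ^ (α - β) < 1 :=
    Real.rpow_lt_one_of_one_lt_of_neg one_lt_two (by linarith)
  have := tail_ratio a ha hq0 hq1 hr
  exact this
end

section
/- Let φ : [0,∞) → (0,∞) be decreasing and regularly varying of index −1, and set Φ(t) = ∫₀^t φ(s) ds. Then there exist ε > 0, C > 0 and T such that for all t ≥ T, t − Φ^{−1}(Φ(t) − 1) ≥ C t^{1/2+ε}. In particular t − Φ^{−1}(Φ(t)−1) → ∞ as t → ∞. -/
open Filter Set MeasureTheory intervalIntegral

/-- **Proposition.** Let `φ` be decreasing, positive and regularly varying of index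
`-1`, with primitive `Φ(t) = ∫₀^t φ`. If `Ψ` is the inverse function of `Φ` on
`[0,∞)`, then there are `ε > 0`, `C > 0` and `T` such that
`t - Ψ(Φ(t) - 1) ≥ C t^{1/2+ε}` for all `t ≥ T`; in particular
`t - Ψ(Φ(t) - 1) → ∞` as `t → ∞`. -/
theorem sub_inv_primitive_ge_rpow (φ : ℝ → ℝ) (Ψ : ℝ → ℝ)
    (hpos : ∀ t, 0 ≤ t → 0 < φ t)
    (hdec : ∀ s t, 0 ≤ s → s ≤ t → φ t ≤ φ s)
    (hrv : ∀ l : ℝ, 0 < l →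
      Tendsto (fun t => φ (l * t) / φ t) atTop (nhds l⁻¹))
    (hΨ : ∀ t, 0 ≤ t → Ψ (∫ s in (0:ℝ)..t, φ s) = t)
    (hΦtop : Tendsto (fun t => ∫ s in (0:ℝ)..t, φ s) atTop atTop) :
    (∃ ε > (0:ℝ), ∃ C > (0:ℝ), ∃ T : ℝ, ∀ t ≥ T,
        C * t ^ ((1:ℝ)/2 + ε) ≤ t - Ψ ((∫ s in (0:ℝ)..t, φ s) - 1)) ∧
      Tendsto (fun t => t - Ψ ((∫ s in (0:ℝ)..t, φ s) - 1)) atTop atTop := by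
  set Φ : ℝ → ℝ := fun t => ∫ s in (0:ℝ)..t, φ s with hΦdef
  -- integrability
  have hint : ∀ a b : ℝ, 0 ≤ a → 0 ≤ b → IntervalIntegrable φ volume a b := by
    intro a b ha hb
    apply AntitoneOn.intervalIntegrable
    intro s hs t ht hst
    exact hdec s t (le_trans (le_min ha hb) hs.1) hst
  -- integral bounds
  have key : ∀ u t : ℝ, 0 ≤ u → u ≤ t →
      (t - u) * φ t ≤ Φ t - Φ u ∧ Φ t - Φ u ≤ (t - u) * φ u := by
    intro u t hu hut
    have h0t : (0:ℝ) ≤ t := hu.trans hut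
    have hIut : IntervalIntegrable φ volume u t := hint u t hu h0t
    have hadd : Φ u + ∫ s in u..t, φ s = Φ t :=
      integral_add_adjacent_intervals (hint 0 u le_rfl hu) hIut
    have hsub : Φ t - Φ u = ∫ s in u..t, φ s := by linarith
    constructor
    · have h1 : ∫ s in u..t, (fun _ => φ t) s ≤ ∫ s in u..t, φ s := by
        apply integral_mono_on hut intervalIntegrable_const hIut
        intro s hs; exact hdec s t (hu.trans hs.1) hs.2
      rw [intervalIntegral.integral_const, smul_eq_mul] at h1
      linarith
    · have h1 : ∫ s in u..t, φ s ≤ ∫ s in u..t, (fun _ => φ u) s := by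
        apply integral_mono_on hut hIut intervalIntegrable_const
        intro s hs; exact hdec u s hu hs.1
      rw [intervalIntegral.integral_const, smul_eq_mul] at h1
      linarith
  -- existence of inverse point
  have hIVT : ∀ t : ℝ, 0 ≤ t → 1 ≤ Φ t → ∃ u, 0 ≤ u ∧ u ≤ t ∧ Φ u = Φ t - 1 := by
    intro t h0t h1t
    have hcont : ContinuousOn Φ (Icc 0 t) := by
      have := continuousOn_primitive_interval' (μ := volume) (f := φ)
        (hint 0 t le_rfl h0t) left_mem_uIcc
      rwa [uIcc_of_le h0t] at this
    have hΦ0 : Φ 0 = 0 := integral_same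
    have hmem : Φ t - 1 ∈ Icc (Φ 0) (Φ t) := ⟨by rw [hΦ0]; linarith, by linarith⟩
    obtain ⟨u, hu, hΦu⟩ := intermediate_value_Icc h0t hcont hmem
    exact ⟨u, hu.1, hu.2, hΦu⟩
  -- eventual inequality from hrv (1/2): φ (t/2) ≤ 3 * φ t for t ≥ T₁
  obtain ⟨T₁, hT₁⟩ : ∃ T : ℝ, ∀ t ≥ T, φ ((1/2) * t) ≤ 3 * φ t := by
    have h := (hrv (1/2) (by norm_num)).eventually (eventually_le_nhds (by norm_num : ((1:ℝ)/2)⁻¹ < 3))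
    obtain ⟨T, hT⟩ := (h.and (eventually_ge_atTop (0:ℝ))).exists_forall_of_atTop
    exact ⟨T, fun t ht => by
      have := hT t ht
      have hp := hpos t this.2
      rw [div_le_iff₀ hp] at this
      · exact this.1⟩
  -- eventual inequality from hrv 2 : φ (2t) ≤ 0.55 φ t for t ≥ T₀'
  obtain ⟨T₀', hT₀'⟩ : ∃ T : ℝ, ∀ t ≥ T, φ (2 * t) ≤ 0.55 * φ t := by
    have h := (hrv 2 (by norm_num)).eventually (eventually_le_nhds (by norm_num : ((2:ℝ))⁻¹ < 0.55))
    obtain ⟨T, hT⟩ := (h.and (eventually_ge_atTop (0:ℝ))).exists_forall_of_atTop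
    exact ⟨T, fun t ht => by
      have := hT t ht
      have hp := hpos t this.2
      rw [div_le_iff₀ hp] at this
      · exact this.1⟩
  set T₀ : ℝ := max T₀' 1 with hT₀def
  have hT₀1 : (1:ℝ) ≤ T₀ := le_max_right _ _
  have hT₀0 : (0:ℝ) < T₀ := lt_of_lt_of_le one_pos hT₀1
  -- dyadic induction
  have hdy : ∀ n : ℕ, φ (2 ^ n * T₀) ≤ 0.55 ^ n * φ T₀ := by
    intro n
    induction n with
    | zero => simp
    | succ n ih =>
      have h2n : (1:ℝ) ≤ 2 ^ n := one_le_pow₀ one_le_two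
      have hge : T₀' ≤ 2 ^ n * T₀ := by
        calc T₀' ≤ T₀ := le_max_left _ _
        _ ≤ 2 ^ n * T₀ := le_mul_of_one_le_left hT₀0.le h2n
      have := hT₀' (2 ^ n * T₀) hge
      calc φ (2 ^ (n+1) * T₀) = φ (2 * (2 ^ n * T₀)) := by ring_nf
        _ ≤ 0.55 * φ (2 ^ n * T₀) := this
        _ ≤ 0.55 * (0.55 ^ n * φ T₀) := by nlinarith
        _ = 0.55 ^ (n+1) * φ T₀ := by ring
  -- numeric pow lemma
  have hnum : ∀ n : ℕ, ((2:ℝ) ^ n) ^ 3 * ((0.55:ℝ) ^ n) ^ 4 ≤ 1 := by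
    intro n
    have : ((2:ℝ) ^ n) ^ 3 * ((0.55:ℝ) ^ n) ^ 4 = ((2:ℝ)^3 * (0.55:ℝ)^4) ^ n := by
      rw [mul_pow, ← pow_mul, ← pow_mul, ← pow_mul, ← pow_mul, Nat.mul_comm n 3, Nat.mul_comm n 4]
    rw [this]
    exact pow_le_one₀ (by positivity) (by norm_num)
  -- decay bound
  obtain ⟨K, hK0, hdecay⟩ : ∃ K : ℝ, 0 < K ∧ ∀ t ≥ T₀, t ^ 3 * φ t ^ 4 ≤ K := by
    refine ⟨8 * T₀ ^ 3 * φ T₀ ^ 4, by have := hpos T₀ hT₀0.le; positivity, ?_⟩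
    intro t ht
    have ht0 : 0 < t := lt_of_lt_of_le hT₀0 ht
    set n : ℕ := ⌊Real.logb 2 (t / T₀)⌋₊ with hn
    have hx1 : (1:ℝ) ≤ t / T₀ := (one_le_div hT₀0).2 ht
    have hlogb0 : 0 ≤ Real.logb 2 (t / T₀) := Real.logb_nonneg one_lt_two hx1
    have h1 : (2:ℝ) ^ n ≤ t / T₀ := by
      have : (2:ℝ) ^ (n:ℝ) ≤ (2:ℝ) ^ Real.logb 2 (t / T₀) :=
        Real.rpow_le_rpow_of_exponent_le one_le_two (Nat.floor_le hlogb0)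
      rwa [Real.rpow_natCast, Real.rpow_logb two_pos (by norm_num) (by linarith)] at this
    have h2 : t / T₀ ≤ (2:ℝ) ^ (n + 1) := by
      have hlt : Real.logb 2 (t / T₀) < (n:ℝ) + 1 := Nat.lt_floor_add_one _
      have : (2:ℝ) ^ Real.logb 2 (t / T₀) ≤ (2:ℝ) ^ ((n:ℝ) + 1) :=
        Real.rpow_le_rpow_of_exponent_le one_le_two hlt.le
      rw [Real.rpow_logb two_pos (by norm_num) (by linarith)] at this
      calc t / T₀ ≤ (2:ℝ) ^ ((n:ℝ) + 1) := this
        _ = (2:ℝ) ^ (n + 1) := by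
          rw [← Real.rpow_natCast 2 (n+1)]; norm_num
    have h1' : (2:ℝ) ^ n * T₀ ≤ t := by
      have := mul_le_mul_of_nonneg_right h1 hT₀0.le
      rwa [div_mul_cancel₀ t hT₀0.ne'] at this
    have h2' : t ≤ (2:ℝ) ^ (n+1) * T₀ := by
      have := mul_le_mul_of_nonneg_right h2 hT₀0.le
      rwa [div_mul_cancel₀ t hT₀0.ne'] at this
    have hφt : φ t ≤ 0.55 ^ n * φ T₀ := le_trans (hdec _ t (by positivity) h1') (hdy n)
    have hφt0 : 0 ≤ φ t := (hpos t ht0.le).le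
    have hφT0 : 0 ≤ φ T₀ := (hpos T₀ hT₀0.le).le
    calc t ^ 3 * φ t ^ 4 ≤ ((2:ℝ) ^ (n+1) * T₀) ^ 3 * (0.55 ^ n * φ T₀) ^ 4 := by
          apply mul_le_mul
          · exact pow_le_pow_left₀ ht0.le h2' 3
          · exact pow_le_pow_left₀ hφt0 hφt 4
          · positivity
          · positivity
      _ = ((2:ℝ) ^ n) ^ 3 * ((0.55:ℝ) ^ n) ^ 4 * (8 * T₀ ^ 3 * φ T₀ ^ 4) := by ring
      _ ≤ 1 * (8 * T₀ ^ 3 * φ T₀ ^ 4) := by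
          have := hpos T₀ hT₀0.le
          apply mul_le_mul_of_nonneg_right (hnum n) (by positivity)
      _ = 8 * T₀ ^ 3 * φ T₀ ^ 4 := one_mul _
  -- choose constants
  obtain ⟨C, hC0, hC3, hCK⟩ : ∃ C : ℝ, 0 < C ∧ C ≤ 1/3 ∧ (81 * C ^ 4) * K ≤ 1 := by
    refine ⟨1 / (3 * (K + 1)), by positivity, ?_, ?_⟩
    · rw [div_le_div_iff₀ (by positivity) (by norm_num)]
      nlinarith
    · have hKp : K ≤ (K+1)^4 := by
        have := le_self_pow₀ (by linarith : (1:ℝ) ≤ K + 1) (by norm_num : 4 ≠ 0)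
        linarith
      have h2 : 81 * (1 / (3 * (K + 1))) ^ 4 * K = K / (K+1)^4 := by
        field_simp; ring
      rw [h2, div_le_one (by positivity)]
      exact hKp
  -- Φ eventually ≥ 1
  obtain ⟨T₂, hT₂⟩ := (hΦtop.eventually (eventually_ge_atTop (1:ℝ))).exists_forall_of_atTop
  set T : ℝ := max (max T₀ (2 * T₁)) (max T₂ 1) with hTdef
  -- main estimate
  have main : ∀ t ≥ T, C * t ^ ((1:ℝ)/2 + 1/4) ≤ t - Ψ (Φ t - 1) := by
    intro t ht
    have ht1 : (1:ℝ) ≤ t := le_trans (le_max_right T₂ 1 |>.trans (le_max_right _ _)) ht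
    have ht0 : (0:ℝ) < t := lt_of_lt_of_le one_pos ht1
    have htT₀ : T₀ ≤ t := le_trans ((le_max_left T₀ (2*T₁)).trans (le_max_left _ _)) ht
    have htT₁ : 2 * T₁ ≤ t := le_trans ((le_max_right T₀ (2*T₁)).trans (le_max_left _ _)) ht
    have htT₂ : T₂ ≤ t := le_trans ((le_max_left T₂ 1).trans (le_max_right _ _)) ht
    have hΦt1 : 1 ≤ Φ t := hT₂ t htT₂
    obtain ⟨u, hu0, hut, hΦu⟩ := hIVT t ht0.le hΦt1
    have hΨu : Ψ (Φ t - 1) = u := by rw [← hΦu]; exact hΨ u hu0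
    rw [hΨu]
    have hbd := key u t hu0 hut
    have hφu : 0 < φ u := hpos u hu0
    have htu : 1 / φ u ≤ t - u := by
      rw [div_le_iff₀ hφu]
      nlinarith [hbd.2]
    -- rpow equals: (t ^ (3/4))^4 = t^3
    have hrpow_pos : 0 < t ^ ((1:ℝ)/2 + 1/4) := Real.rpow_pos_of_pos ht0 _
    have hrpow4 : (t ^ ((1:ℝ)/2 + 1/4)) ^ (4:ℕ) = t ^ (3:ℕ) := by
      rw [← Real.rpow_natCast (t ^ ((1:ℝ)/2 + 1/4)) 4, ← Real.rpow_mul ht0.le,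
        ← Real.rpow_natCast t 3]
      norm_num
    by_cases hcase : u ≤ t / 2
    · -- t - u ≥ t/2 ≥ C t^{3/4}
      have h34 : t ^ ((1:ℝ)/2 + 1/4) ≤ t := by
        calc t ^ ((1:ℝ)/2 + 1/4) ≤ t ^ (1:ℝ) :=
          Real.rpow_le_rpow_of_exponent_le ht1 (by norm_num)
        _ = t := Real.rpow_one t
      calc C * t ^ ((1:ℝ)/2 + 1/4) ≤ (1/3) * t := by
            apply mul_le_mul hC3 h34 hrpow_pos.le (by norm_num)
        _ ≤ t - u := by linarith
    · -- u > t/2; φ u ≤ φ(t/2) ≤ 3 φ t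
      push_neg at hcase
      have hφut : φ u ≤ 3 * φ t := by
        have h1 : φ u ≤ φ (t / 2) := hdec (t/2) u (by positivity) hcase.le
        have h2 : φ ((1/2) * t) ≤ 3 * φ t := hT₁ t (by linarith)
        rw [show (1/2 : ℝ) * t = t / 2 by ring] at h2
        linarith
      have hφt : 0 < φ t := hpos t ht0.le
      have hmain : C * t ^ ((1:ℝ)/2 + 1/4) ≤ 1 / (3 * φ t) := by
        rw [le_div_iff₀ (by positivity)]
        -- reduce to fourth powers
        have h4 : (C * t ^ ((1:ℝ)/2 + 1/4) * (3 * φ t)) ^ (4:ℕ) ≤ 1 := by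
          have hexp : (C * t ^ ((1:ℝ)/2 + 1/4) * (3 * φ t)) ^ (4:ℕ)
              = (81 * C ^ 4) * (t ^ 3 * φ t ^ 4) := by
            rw [mul_pow, mul_pow, mul_pow, hrpow4]; ring
          rw [hexp]
          have hd := hdecay t htT₀
          calc (81 * C ^ 4) * (t ^ 3 * φ t ^ 4) ≤ (81 * C ^ 4) * K := by
                apply mul_le_mul_of_nonneg_left hd (by positivity)
            _ ≤ 1 := hCK
        have hnn : 0 ≤ C * t ^ ((1:ℝ)/2 + 1/4) * (3 * φ t) := by positivity
        exact (pow_le_one_iff_of_nonneg hnn (by norm_num)).1 h4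
      calc C * t ^ ((1:ℝ)/2 + 1/4) ≤ 1 / (3 * φ t) := hmain
        _ ≤ 1 / φ u := one_div_le_one_div_of_le hφu hφut
        _ ≤ t - u := htu
  refine ⟨⟨1/4, by norm_num, C, hC0, T, main⟩, ?_⟩
  apply tendsto_atTop_mono' atTop ?_
    ((tendsto_rpow_atTop (by norm_num : (0:ℝ) < 1/2 + 1/4)).const_mul_atTop hC0)
  filter_upwards [eventually_ge_atTop T] with t ht using main t ht
end

section
/- Let S be a Hilbert–Schmidt operator and V a positive compact operator on a separable Hilbert space, and suppose the spectral projection Q = E_V[0,s] satisfies rank(1−Q) ≤ n. Then n · μ(2n,S)² ≤ ‖S Q‖_{HS}², where μ(k,S) denotes the k-th singular value of S. -/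
/-!
Write `S = S Q + S (1 - Q)`. The second summand has rank at most `n`, so removing it costs at
most `n` singular values: `μ(n + k, S) ≤ μ(k, S Q)`. Hence each of `μ(0, S Q), …, μ(n - 1, S Q)`
is at least `μ(2n, S)`, and the first `n` terms of `‖S Q‖²_{HS}` already give the bound. The
series is summable because `μ(k, S Q) ≤ ‖Q‖ μ(k, S)`.
-/

open scoped InnerProductSpace

/-- The `n`-th singular value (approximation number) of a bounded operator `T`:
the distance from `T` to the operators of rank at most `n`. For compact operators
on a Hilbert space this is the decreasing sequence of singular values `μ(n,T)`. -/
noncomputable def approxNum {H : Type*} [NormedAddCommGroup H] [InnerProductSpace ℂ H]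
    (T : H →L[ℂ] H) (n : ℕ) : ℝ :=
  sInf ((fun A : H →L[ℂ] H => ‖T - A‖) ''
    {A | FiniteDimensional ℂ (LinearMap.range (A : H →ₗ[ℂ] H)) ∧
      Module.finrank ℂ (LinearMap.range (A : H →ₗ[ℂ] H)) ≤ n})

lemma mul_sq_le_tsum_sq_of_le_shift {a b : ℕ → ℝ} {n : ℕ} (ha : Antitone a)
    (ha₀ : ∀ k, 0 ≤ a k) (hab : ∀ k, a (n + k) ≤ b k) (hb : Summable fun k => b k ^ 2) :
    (n : ℝ) * a (2 * n) ^ 2 ≤ ∑' k, b k ^ 2 := by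
  have hterm : ∀ k ∈ Finset.range n, a (2 * n) ^ 2 ≤ b k ^ 2 := fun k hk =>
    pow_le_pow_left₀ (ha₀ _)
      ((ha (by have := Finset.mem_range.mp hk; omega)).trans (hab k)) 2
  calc (n : ℝ) * a (2 * n) ^ 2 = ∑ _k ∈ Finset.range n, a (2 * n) ^ 2 := by simp
    _ ≤ ∑ k ∈ Finset.range n, b k ^ 2 := Finset.sum_le_sum hterm
    _ ≤ ∑' k, b k ^ 2 := hb.sum_le_tsum _ fun k _ => sq_nonneg _

section FiniteRank

variable {H : Type*} [NormedAddCommGroup H] [InnerProductSpace ℂ H]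

/-- `approxNum T n` is, by definition, the infimum of `‖T - A‖` over the `A` with `RankLE A n`. -/
def RankLE (A : H →L[ℂ] H) (n : ℕ) : Prop :=
  FiniteDimensional ℂ (LinearMap.range (A : H →ₗ[ℂ] H)) ∧
    Module.finrank ℂ (LinearMap.range (A : H →ₗ[ℂ] H)) ≤ n

namespace RankLE

lemma zero (n : ℕ) : RankLE (0 : H →L[ℂ] H) n := by
  rw [RankLE, ContinuousLinearMap.toLinearMap_zero, LinearMap.range_zero]
  exact ⟨inferInstance, by simp⟩

lemma of_range_le {B : H →L[ℂ] H} {W : Submodule ℂ H} [FiniteDimensional ℂ W] {n : ℕ}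
    (hW : Module.finrank ℂ W ≤ n) (hBW : LinearMap.range (B : H →ₗ[ℂ] H) ≤ W) : RankLE B n :=
  ⟨Submodule.finiteDimensional_of_le hBW, (Submodule.finrank_mono hBW).trans hW⟩

lemma mono {A : H →L[ℂ] H} {m n : ℕ} (hA : RankLE A m) (hmn : m ≤ n) : RankLE A n :=
  ⟨hA.1, hA.2.trans hmn⟩

lemma comp_right {A : H →L[ℂ] H} {n : ℕ} (hA : RankLE A n) (Q : H →L[ℂ] H) :
    RankLE (A.comp Q) n :=
  have := hA.1
  of_range_le hA.2 (LinearMap.range_comp_le_range _ _)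

lemma comp_left {A : H →L[ℂ] H} {n : ℕ} (hA : RankLE A n) (S : H →L[ℂ] H) :
    RankLE (S.comp A) n := by
  have := hA.1
  rw [RankLE, ContinuousLinearMap.toLinearMap_comp, LinearMap.range_comp]
  exact ⟨Module.Finite.map _ _, (Submodule.finrank_map_le _ _).trans hA.2⟩

lemma add {A B : H →L[ℂ] H} {m n : ℕ} (hA : RankLE A m) (hB : RankLE B n) :
    RankLE (A + B) (m + n) := by
  have := hA.1
  have := hB.1
  have hrange : LinearMap.range ((A + B : H →L[ℂ] H) : H →ₗ[ℂ] H) ≤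
      LinearMap.range (A : H →ₗ[ℂ] H) ⊔ LinearMap.range (B : H →ₗ[ℂ] H) := by
    rintro _ ⟨x, rfl⟩
    exact Submodule.add_mem_sup (LinearMap.mem_range_self _ x) (LinearMap.mem_range_self _ x)
  exact of_range_le
    ((Submodule.finrank_add_le_finrank_add_finrank _ _).trans (add_le_add hA.2 hB.2)) hrange

end RankLE

namespace approxNum

lemma nonempty (T : H →L[ℂ] H) (n : ℕ) :
    ((fun A : H →L[ℂ] H => ‖T - A‖) '' {A | RankLE A n}).Nonempty :=
  ⟨_, 0, RankLE.zero n, rfl⟩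

lemma bddBelow (T : H →L[ℂ] H) (n : ℕ) :
    BddBelow ((fun A : H →L[ℂ] H => ‖T - A‖) '' {A | RankLE A n}) :=
  ⟨0, by rintro _ ⟨A, _, rfl⟩; exact norm_nonneg _⟩

lemma nonneg (T : H →L[ℂ] H) (n : ℕ) : 0 ≤ approxNum T n :=
  Real.sInf_nonneg (by rintro _ ⟨A, _, rfl⟩; exact norm_nonneg _)

lemma le_norm_sub {T A : H →L[ℂ] H} {n : ℕ} (hA : RankLE A n) : approxNum T n ≤ ‖T - A‖ :=
  csInf_le (bddBelow T n) ⟨A, hA, rfl⟩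

lemma antitone (T : H →L[ℂ] H) : Antitone (approxNum T) := fun _ _ hmn =>
  csInf_le_csInf (bddBelow T _) (nonempty T _) <| by
    rintro _ ⟨A, hA, rfl⟩
    exact ⟨A, RankLE.mono hA hmn, rfl⟩

lemma add_le {A B : H →L[ℂ] H} {n : ℕ} (hB : RankLE B n) (k : ℕ) :
    approxNum (A + B) (n + k) ≤ approxNum A k :=
  le_csInf (nonempty A k) <| by
    rintro _ ⟨A', hA', rfl⟩
    simpa only [add_sub_add_right_eq_sub] using
      le_norm_sub (T := A + B) ((RankLE.add hA' hB).mono (Nat.add_comm k n).le)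

lemma comp_le (T Q : H →L[ℂ] H) (k : ℕ) : approxNum (T.comp Q) k ≤ ‖Q‖ * approxNum T k := by
  rw [← smul_eq_mul, show approxNum T k = sInf _ from rfl,
    ← Real.sInf_smul_of_nonneg (norm_nonneg Q)]
  refine le_csInf ((nonempty T k).smul_set) ?_
  rintro _ ⟨_, ⟨A, hA, rfl⟩, rfl⟩
  calc approxNum (T.comp Q) k ≤ ‖T.comp Q - A.comp Q‖ := le_norm_sub (RankLE.comp_right hA Q)
    _ = ‖(T - A).comp Q‖ := by rw [ContinuousLinearMap.sub_comp]
    _ ≤ ‖Q‖ • ‖T - A‖ := by rw [smul_eq_mul, mul_comm]; exact (T - A).opNorm_comp_le Q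

lemma summable_sq_comp {T : H →L[ℂ] H} (hT : Summable fun k => approxNum T k ^ 2)
    (Q : H →L[ℂ] H) : Summable fun k => approxNum (T.comp Q) k ^ 2 := by
  refine (hT.mul_left (‖Q‖ ^ 2)).of_nonneg_of_le (fun k => sq_nonneg _) fun k => ?_
  rw [← mul_pow]
  exact pow_le_pow_left₀ (nonneg _ _) (comp_le T Q k) 2

end approxNum

end FiniteRank

theorem mul_approxNum_sq_le_hilbertSchmidt_sq_general
    {H : Type*} [NormedAddCommGroup H] [InnerProductSpace ℂ H]
    (S Q : H →L[ℂ] H) (n : ℕ)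
    (hS : Summable (fun k => approxNum S k ^ 2))
    -- `rank (1 - Q) ≤ n`:
    (hfin : FiniteDimensional ℂ (LinearMap.range ((1 - Q : H →L[ℂ] H) : H →ₗ[ℂ] H)))
    (hrank : Module.finrank ℂ (LinearMap.range ((1 - Q : H →L[ℂ] H) : H →ₗ[ℂ] H)) ≤ n) :
    (n : ℝ) * approxNum S (2 * n) ^ 2 ≤ ∑' k, approxNum (S.comp Q) k ^ 2 := by
  have hsplit : S.comp Q + S.comp (1 - Q) = S := by
    rw [← ContinuousLinearMap.comp_add, add_sub_cancel, ContinuousLinearMap.one_def,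
      ContinuousLinearMap.comp_id]
  have hshift (k : ℕ) : approxNum S (n + k) ≤ approxNum (S.comp Q) k := by
    simpa only [hsplit] using
      approxNum.add_le (A := S.comp Q) ((show RankLE (1 - Q) n from ⟨hfin, hrank⟩).comp_left S) k
  exact mul_sq_le_tsum_sq_of_le_shift (approxNum.antitone S) (approxNum.nonneg S) hshift
    (approxNum.summable_sq_comp hS Q)

/-- **Lemma.** Let `S` be a Hilbert–Schmidt operator and `V` a positive compact
operator on a separable Hilbert space, and let `Q = E_V[0,s]` be a spectral
projection of `V` with `rank(1 - Q) ≤ n`. Then `n · μ(2n, S)² ≤ ‖S Q‖²_{HS}`,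
where the squared Hilbert–Schmidt norm is the sum of the squared singular
values. -/
theorem mul_approxNum_sq_le_hilbertSchmidt_sq
    {H : Type*} [NormedAddCommGroup H] [InnerProductSpace ℂ H] [CompleteSpace H]
    (S V Q : H →L[ℂ] H) (s : ℝ) (n : ℕ)
    (hS : Summable (fun k => approxNum S k ^ 2))
    (hV : V.IsPositive) (hVcpt : IsCompactOperator V)
    -- `Q` is the spectral projection `E_V[0,s]` of `V`:
    (hQsa : IsSelfAdjoint Q) (hQproj : Q.comp Q = Q)
    (hQV : Q.comp V = V.comp Q)
    (hVQ : ‖V.comp Q‖ ≤ s)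
    (hcompl : ∀ x : H, Q x = 0 → s * ‖x‖ ^ 2 ≤ (⟪V x, x⟫_ℂ).re)
    -- `rank (1 - Q) ≤ n`:
    (hfin : FiniteDimensional ℂ (LinearMap.range ((1 - Q : H →L[ℂ] H) : H →ₗ[ℂ] H)))
    (hrank : Module.finrank ℂ (LinearMap.range ((1 - Q : H →L[ℂ] H) : H →ₗ[ℂ] H)) ≤ n) :
    (n : ℝ) * approxNum S (2 * n) ^ 2 ≤ ∑' k, approxNum (S.comp Q) k ^ 2 :=
  mul_approxNum_sq_le_hilbertSchmidt_sq_general S Q n hS hfin hrank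
end

section
/- Let φ : (0,∞) → (0,∞) be smooth with smooth regular variation of index ρ, meaning for every n, lim_{t→∞} t^n φ^{(n)}(t)/φ(t) = ρ(ρ−1)⋯(ρ−n+1). Then for all k, m ∈ ℕ there are constants C_{k,m} such that |∂_t^m (φ^{(k)}/φ)(t)| ≤ C_{k,m} (1+t)^{−k−m} for all t ≥ 0 (assuming the relevant quotients are bounded on compact sets). -/
open Filter Finset

private lemma iteratedDeriv_sub_my {n : ℕ} {f g : ℝ → ℝ}
    (hf : ContDiff ℝ n f) (hg : ContDiff ℝ n g) (x : ℝ) :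
    iteratedDeriv n (fun t => f t - g t) x = iteratedDeriv n f x - iteratedDeriv n g x := by
  have h : (fun t => f t - g t) = f - g := rfl
  rw [h, ← iteratedDerivWithin_univ, ← iteratedDerivWithin_univ, ← iteratedDerivWithin_univ]
  exact iteratedDerivWithin_sub (Set.mem_univ x) uniqueDiffOn_univ hf.contDiffWithinAt hg.contDiffWithinAt

/-- **Lemma.** Let `φ` be smooth and positive with smooth regular variation of
index `ρ`, i.e. `t^n φ^{(n)}(t)/φ(t) → ρ(ρ-1)⋯(ρ-n+1)` for every `n`.
Then for all `k, m ∈ ℕ` there is a constant `C_{k,m}` such that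
`|∂_t^m (φ^{(k)}/φ)(t)| ≤ C_{k,m} (1+t)^{-k-m}` for all `t ≥ 0`. -/
theorem deriv_quotient_bound_of_smooth_regular_variation
    (φ : ℝ → ℝ) (ρ : ℝ)
    (hsmooth : ContDiff ℝ (⊤ : ℕ∞) φ)
    (hpos : ∀ t : ℝ, 0 < φ t)
    (hsrv : ∀ n : ℕ,
      Tendsto (fun t => t ^ n * iteratedDeriv n φ t / φ t) atTop
        (nhds (∏ i ∈ Finset.range n, (ρ - i)))) :
    ∀ k m : ℕ, ∃ C : ℝ, ∀ t : ℝ, 0 ≤ t →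
      |iteratedDeriv m (fun s => iteratedDeriv k φ s / φ s) t| ≤
        C / (1 + t) ^ (k + m) := by
  have hle : ∀ j : ℕ, (j : WithTop ℕ∞) ≤ ((⊤:ℕ∞) : WithTop ℕ∞) := fun j => by
    exact_mod_cast le_top
  have hle1 : (1 : WithTop ℕ∞) ≤ ((⊤:ℕ∞) : WithTop ℕ∞) := by exact_mod_cast le_top
  have hφ : ContDiff ℝ ((⊤:ℕ∞) : WithTop ℕ∞) φ := hsmooth.of_le (by simp)
  have hiter : ∀ k : ℕ, ContDiff ℝ ((⊤:ℕ∞) : WithTop ℕ∞) (iteratedDeriv k φ) := by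
    intro k; rw [iteratedDeriv_eq_iterate]; exact hφ.iterate_deriv k
  set ψ : ℕ → ℝ → ℝ := fun k s => iteratedDeriv k φ s / φ s with hψ
  have hψc : ∀ k, ContDiff ℝ ((⊤:ℕ∞) : WithTop ℕ∞) (ψ k) := fun k =>
    (hiter k).div hφ fun t => (hpos t).ne'
  -- base case bounds
  have base : ∀ k : ℕ, ∃ C : ℝ, ∀ t : ℝ, 0 ≤ t → |ψ k t| ≤ C / (1 + t) ^ k := by
    intro k
    set L : ℝ := ∏ i ∈ Finset.range k, (ρ - i) with hLdef
    set g : ℝ → ℝ := fun t => (1 + t) ^ k * ψ k t with hgdef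
    have hgc : Continuous g :=
      ((continuous_const.add continuous_id).pow k).mul (hψc k).continuous
    have hgt : Tendsto g atTop (nhds L) := by
      have h0 : Tendsto (fun t : ℝ => (1 + t) / t) atTop (nhds 1) := by
        have h0' : Tendsto (fun t : ℝ => t⁻¹ + 1) atTop (nhds (0 + 1)) :=
          tendsto_inv_atTop_zero.add tendsto_const_nhds
        rw [zero_add] at h0'
        refine h0'.congr' ?_
        filter_upwards [eventually_ge_atTop (1:ℝ)] with t ht
        have ht0 : t ≠ 0 := by linarith
        field_simp
      have h1 : Tendsto (fun t : ℝ => ((1 + t) / t) ^ k) atTop (nhds 1) := by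
        simpa using h0.pow k
      have h2 := h1.mul (hsrv k)
      rw [one_mul] at h2
      refine h2.congr' ?_
      filter_upwards [eventually_ge_atTop (1:ℝ)] with t ht
      have ht0 : t ≠ 0 := by linarith
      have htk : t ^ k ≠ 0 := pow_ne_zero _ ht0
      simp only [hgdef, hψ]
      field_simp
      rw [div_pow, div_mul_cancel₀ _ htk]; ring
    obtain ⟨T, hT⟩ : ∃ T : ℝ, ∀ t ≥ T, |g t| ≤ |L| + 1 := by
      have h2 : ∀ᶠ t in atTop, |g t| ≤ |L| + 1 := by
        filter_upwards [hgt.eventually (Metric.ball_mem_nhds L one_pos)] with t ht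
        rw [Real.dist_eq] at ht
        have h3 := abs_sub_abs_le_abs_sub (g t) L
        linarith
      exact eventually_atTop.mp h2
    obtain ⟨B, hB⟩ :=
      (isCompact_Icc (a := (0:ℝ)) (b := T)).exists_bound_of_continuousOn hgc.continuousOn
    refine ⟨max B (|L| + 1), fun t ht => ?_⟩
    have hp : (0:ℝ) < (1 + t) ^ k := by positivity
    have hgb : |g t| ≤ max B (|L| + 1) := by
      rcases le_total t T with h | h
      · exact le_trans (by simpa using hB t ⟨ht, h⟩) (le_max_left _ _)
      · exact le_trans (hT t h) (le_max_right _ _)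
    rw [le_div_iff₀ hp]
    have hge : |g t| = |ψ k t| * (1 + t) ^ k := by
      have : g t = (1 + t) ^ k * ψ k t := rfl
      rw [this, abs_mul, abs_of_pos hp, mul_comm]
    linarith [hge ▸ hgb]
  -- derivative identity
  have hder : ∀ k : ℕ, deriv (ψ k) = fun s => ψ (k + 1) s - ψ k s * ψ 1 s := by
    intro k
    funext t
    have hd1 : DifferentiableAt ℝ (iteratedDeriv k φ) t :=
      ((hiter k).differentiable (by simp)).differentiableAt
    have hd2 : DifferentiableAt ℝ φ t := (hφ.differentiable (by simp)).differentiableAt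
    have hne : φ t ≠ 0 := (hpos t).ne'
    simp only [hψ]
    rw [deriv_fun_div hd1 hd2 hne, iteratedDeriv_one, iteratedDeriv_succ]
    field_simp
  -- main induction
  have main : ∀ m k : ℕ, ∃ C : ℝ, ∀ t : ℝ, 0 ≤ t →
      |iteratedDeriv m (ψ k) t| ≤ C / (1 + t) ^ (k + m) := by
    intro m
    induction m using Nat.strong_induction_on with
    | _ m IH =>
      cases m with
      | zero =>
        intro k
        obtain ⟨C, hC⟩ := base k
        exact ⟨C, fun t ht => by simpa using hC t ht⟩
      | succ n =>
        intro k
        obtain ⟨C1, hC1⟩ := IH n (Nat.lt_succ_self n) (k + 1)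
        have hAe : ∀ i : ℕ, ∃ A : ℝ, i ≤ n → ∀ t : ℝ, 0 ≤ t →
            |iteratedDeriv i (ψ k) t| ≤ A / (1 + t) ^ (k + i) := by
          intro i
          by_cases hi : i ≤ n
          · obtain ⟨A, hA⟩ := IH i (by omega) k
            exact ⟨A, fun _ => hA⟩
          · exact ⟨0, fun h => absurd h hi⟩
        choose A hA using hAe
        have hBe : ∀ j : ℕ, ∃ B : ℝ, j ≤ n → ∀ t : ℝ, 0 ≤ t →
            |iteratedDeriv j (ψ 1) t| ≤ B / (1 + t) ^ (1 + j) := by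
          intro j
          by_cases hj : j ≤ n
          · obtain ⟨B, hB⟩ := IH j (by omega) 1
            exact ⟨B, fun _ => hB⟩
          · exact ⟨0, fun h => absurd h hj⟩
        choose B hB using hBe
        set D : ℝ := ∑ i ∈ Finset.range (n + 1), (n.choose i : ℝ) * A i * B (n - i) with hD
        refine ⟨C1 + D, fun t ht => ?_⟩
        have hp1 : (0:ℝ) < 1 + t := by linarith
        have e1 : iteratedDeriv (n + 1) (ψ k) t =
            iteratedDeriv n (ψ (k + 1)) t - iteratedDeriv n (fun s => ψ k s * ψ 1 s) t := by
          rw [iteratedDeriv_succ', hder k]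
          exact iteratedDeriv_sub_my ((hψc (k+1)).of_le (hle n))
            (((hψc k).mul (hψc 1)).of_le (hle n)) t
        have e2 : |iteratedDeriv n (fun s => ψ k s * ψ 1 s) t| ≤ D / (1 + t) ^ (k + n + 1) := by
          have hmul := norm_iteratedFDeriv_mul_le (𝕜 := ℝ) (hψc k) (hψc 1) t (hle n)
          simp only [norm_iteratedFDeriv_eq_norm_iteratedDeriv, Real.norm_eq_abs] at hmul
          calc |iteratedDeriv n (fun s => ψ k s * ψ 1 s) t|
              ≤ ∑ i ∈ Finset.range (n + 1),
                (n.choose i : ℝ) * |iteratedDeriv i (ψ k) t| * |iteratedDeriv (n - i) (ψ 1) t| :=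
                hmul
            _ ≤ ∑ i ∈ Finset.range (n + 1),
                ((n.choose i : ℝ) * A i * B (n - i)) / (1 + t) ^ (k + n + 1) := by
                apply Finset.sum_le_sum
                intro i hi
                have hi' : i ≤ n := by
                  simpa [Nat.lt_succ_iff] using Finset.mem_range.mp hi
                have h1 := hA i hi' t ht
                have h2 := hB (n - i) (Nat.sub_le n i) t ht
                have hA0 : 0 ≤ A i / (1 + t) ^ (k + i) := le_trans (abs_nonneg _) h1
                have hmm := mul_le_mul h1 h2 (abs_nonneg _) hA0
                have hch : (0:ℝ) ≤ (n.choose i : ℝ) := Nat.cast_nonneg _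
                calc (n.choose i : ℝ) * |iteratedDeriv i (ψ k) t| * |iteratedDeriv (n - i) (ψ 1) t|
                    ≤ (n.choose i : ℝ) *
                      (A i / (1 + t) ^ (k + i) * (B (n - i) / (1 + t) ^ (1 + (n - i)))) := by
                      rw [mul_assoc]
                      exact mul_le_mul_of_nonneg_left hmm hch
                  _ = ((n.choose i : ℝ) * A i * B (n - i)) / (1 + t) ^ (k + n + 1) := by
                      rw [div_mul_div_comm, ← pow_add,
                        show k + i + (1 + (n - i)) = k + n + 1 by omega]
                      ring
            _ = D / (1 + t) ^ (k + n + 1) := by rw [hD, Finset.sum_div]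
        rw [e1]
        calc |iteratedDeriv n (ψ (k + 1)) t - iteratedDeriv n (fun s => ψ k s * ψ 1 s) t|
            ≤ |iteratedDeriv n (ψ (k + 1)) t| + |iteratedDeriv n (fun s => ψ k s * ψ 1 s) t| :=
              abs_sub _ _
          _ ≤ C1 / (1 + t) ^ (k + 1 + n) + D / (1 + t) ^ (k + n + 1) :=
              add_le_add (hC1 t ht) e2
          _ = (C1 + D) / (1 + t) ^ (k + (n + 1)) := by
              rw [show k + 1 + n = k + (n + 1) by omega, show k + n + 1 = k + (n + 1) by omega,
                ← add_div]
  intro k m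
  obtain ⟨C, hC⟩ := main m k
  exact ⟨C, fun t ht => hC t ht⟩
end

section
/- Let φ : (0,∞) → (0,∞) be smooth with smooth regular variation (so that a_m := φ^{(m)}/φ satisfies |∂_t^j a_m(t)| ≤ C_{m,j}⟨t⟩^{−m−j}), and suppose φ(t)/φ(bt) is bounded for each fixed b > 0. Then for every k ∈ ℕ and b > 0 there is C_k > 0 with |∂_t^k (φ(t)/φ(bt))| ≤ C_k ⟨t⟩^{−k} for all t. -/
open Filter

/-- comparison of `1+t` and `1+b*t` -/
lemma scale_compare {b : ℝ} (hb : 0 < b) {t : ℝ} (ht : 0 ≤ t) :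
    1 + t ≤ max 1 b⁻¹ * (1 + b * t) := by
  rcases le_or_gt 1 b with h | h
  · have h1 : 1 + t ≤ 1 + b * t := by nlinarith
    have h2 : (1 : ℝ) ≤ max 1 b⁻¹ := le_max_left _ _
    nlinarith
  · have hbinv : 1 ≤ b⁻¹ := by
      rw [le_inv_comm₀ one_pos hb]; simpa using h.le
    have h2 : b⁻¹ ≤ max 1 b⁻¹ := le_max_right _ _
    have h4 : 1 + t ≤ b⁻¹ * (1 + b * t) := by
      have hinv : b⁻¹ * b = 1 := inv_mul_cancel₀ hb.ne'
      nlinarith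
    have h5 : 0 ≤ 1 + b * t := by nlinarith
    nlinarith

/-- **Proposition.** Let `φ` be smooth and positive such that the quotients
`a_m = φ^{(m)}/φ` satisfy `|∂_t^j a_m(t)| ≤ C_{m,j} (1+t)^{-m-j}` (smooth regular
variation), and assume that for every `b > 0` the quotient `φ(t)/φ(bt)` is
bounded.  Then for every `k ∈ ℕ` and `b > 0` there is a constant `C_k > 0` with
`|∂_t^k (φ(t)/φ(bt))| ≤ C_k (1+t)^{-k}` for all `t ≥ 0`. -/
theorem deriv_scaling_quotient_bound
    (φ : ℝ → ℝ)
    (hsmooth : ContDiff ℝ (⊤ : ℕ∞) φ)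
    (hpos : ∀ t : ℝ, 0 < φ t)
    (hsrv : ∀ m j : ℕ, ∃ C : ℝ, ∀ t : ℝ, 0 ≤ t →
      |iteratedDeriv j (fun s => iteratedDeriv m φ s / φ s) t| ≤
        C / (1 + t) ^ (m + j))
    (hbdd : ∀ b : ℝ, 0 < b → ∃ M : ℝ, ∀ t : ℝ, 0 ≤ t → φ t / φ (b * t) ≤ M) :
    ∀ k : ℕ, ∀ b : ℝ, 0 < b → ∃ C > (0:ℝ), ∀ t : ℝ, 0 ≤ t →
      |iteratedDeriv k (fun s => φ s / φ (b * s)) t| ≤ C / (1 + t) ^ k := by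
  intro k b hb
  have hle : ∀ n : ℕ, (n : WithTop ℕ∞) ≤ ((⊤ : ℕ∞) : WithTop ℕ∞) := fun n => by
    exact_mod_cast le_top
  have hphi : ContDiff ℝ (⊤ : ℕ∞) φ := hsmooth.of_le (by simp)
  have hmul : ContDiff ℝ (⊤ : ℕ∞) (fun s : ℝ => b * s) := contDiff_const.mul contDiff_id
  have hphib : ContDiff ℝ (⊤ : ℕ∞) (fun s => φ (b * s)) := hphi.comp hmul
  have hσ : ContDiff ℝ (⊤ : ℕ∞) (fun s => φ s / φ (b * s)) :=
    hphi.div hphib (fun t => (hpos _).ne')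
  have hdphi : ContDiff ℝ (⊤ : ℕ∞) (deriv φ) := (contDiff_infty_iff_deriv.mp hphi).2
  set a1 : ℝ → ℝ := fun s => deriv φ s / φ s with ha1def
  have ha1 : ContDiff ℝ (⊤ : ℕ∞) a1 := hdphi.div hphi (fun t => (hpos t).ne')
  set g : ℝ → ℝ := fun t => a1 t - b * a1 (b * t) with hgdef
  have hg : ContDiff ℝ (⊤ : ℕ∞) g :=
    ha1.sub (contDiff_const.mul (ha1.comp hmul))
  -- the basic derivative identity
  have hderiv : (deriv fun s => φ s / φ (b * s)) = fun t => g t * (φ t / φ (b * t)) := by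
    funext t
    have h1 : DifferentiableAt ℝ φ t := (hphi.differentiable (by simp)).differentiableAt
    have h2 : DifferentiableAt ℝ (fun s => φ (b * s)) t :=
      (hphib.differentiable (by simp)).differentiableAt
    have h3 : deriv (fun s => φ (b * s)) t = b * deriv φ (b * t) := by
      have h := iteratedDeriv_comp_const_mul (n := 1) (f := φ) (hphi.of_le (hle 1)) b
      have h' := congrFun h t
      simpa [iteratedDeriv_one] using h'
    rw [deriv_fun_div h1 h2 (hpos _).ne', h3, hgdef, ha1def]
    have e1 : φ t ≠ 0 := (hpos t).ne'
    have e2 : φ (b * t) ≠ 0 := (hpos _).ne'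
    field_simp
  -- bounds on iterated derivatives of g
  have hgbd : ∀ j : ℕ, ∃ C : ℝ, 0 ≤ C ∧ ∀ t : ℝ, 0 ≤ t →
      |iteratedDeriv j g t| ≤ C / (1 + t) ^ (j + 1) := by
    intro j
    obtain ⟨C, hC⟩ := hsrv 1 j
    have ha1eq : (fun s => iteratedDeriv 1 φ s / φ s) = a1 := by
      funext s; rw [iteratedDeriv_one]
    rw [ha1eq] at hC
    have hCa : ∀ t : ℝ, 0 ≤ t → |iteratedDeriv j a1 t| ≤ C / (1 + t) ^ (j + 1) := by
      intro t ht
      have := hC t ht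
      rwa [Nat.add_comm 1 j] at this
    have hC0 : 0 ≤ C := by
      have h0 := hCa 0 le_rfl
      have : ((1 : ℝ) + 0) ^ (j + 1) = 1 := by norm_num
      rw [this, div_one] at h0
      exact (abs_nonneg _).trans h0
    set c : ℝ := max 1 b⁻¹ with hcdef
    have hc0 : 0 < c := lt_of_lt_of_le one_pos (le_max_left _ _)
    refine ⟨C + b ^ (j + 1) * (C * c ^ (j + 1)), by positivity, fun t ht => ?_⟩
    have hbt : 0 ≤ b * t := by positivity
    -- split iterated derivative of g
    have hsplit : iteratedDeriv j g t =
        iteratedDeriv j a1 t - b * (b ^ j * iteratedDeriv j a1 (b * t)) := by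
      have hsub : iteratedDeriv j g t =
          iteratedDeriv j a1 t - iteratedDeriv j (fun s => b * a1 (b * s)) t := by
        have : g = a1 - fun s => b * a1 (b * s) := by
          funext s; simp [hgdef]
        rw [this]
        simp only [← iteratedDerivWithin_univ]
        exact iteratedDerivWithin_sub (Set.mem_univ t) uniqueDiffOn_univ
          ((ha1.of_le (hle j)).contDiffWithinAt)
          (((contDiff_const.mul (ha1.comp hmul)).of_le (hle j)).contDiffWithinAt)
      have hconst : iteratedDeriv j (fun s => b * a1 (b * s)) t =
          b * iteratedDeriv j (fun s => a1 (b * s)) t := by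
        simp only [← iteratedDerivWithin_univ]
        exact iteratedDerivWithin_const_mul (Set.mem_univ t) uniqueDiffOn_univ b
          (((ha1.comp hmul).of_le (hle j)).contDiffWithinAt)
      have hcomp : iteratedDeriv j (fun s => a1 (b * s)) t =
          b ^ j * iteratedDeriv j a1 (b * t) :=
        congrFun (iteratedDeriv_comp_const_mul (ha1.of_le (hle j)) b) t
      rw [hsub, hconst, hcomp]
    rw [hsplit]
    have hb1 : |iteratedDeriv j a1 t| ≤ C / (1 + t) ^ (j + 1) := hCa t ht
    have hb2 : |iteratedDeriv j a1 (b * t)| ≤ C / (1 + b * t) ^ (j + 1) := hCa _ hbt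
    have hb3 : C / (1 + b * t) ^ (j + 1) ≤ C * c ^ (j + 1) / (1 + t) ^ (j + 1) := by
      rw [div_le_div_iff₀ (by positivity) (by positivity)]
      have hs : 1 + t ≤ c * (1 + b * t) := scale_compare hb ht
      calc C * (1 + t) ^ (j + 1) ≤ C * (c * (1 + b * t)) ^ (j + 1) :=
            mul_le_mul_of_nonneg_left
              (pow_le_pow_left₀ (by linarith : (0:ℝ) ≤ 1 + t) hs (j + 1)) hC0
        _ = C * c ^ (j + 1) * (1 + b * t) ^ (j + 1) := by rw [mul_pow]; ring
    calc |iteratedDeriv j a1 t - b * (b ^ j * iteratedDeriv j a1 (b * t))|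
        ≤ |iteratedDeriv j a1 t| + b ^ (j + 1) * |iteratedDeriv j a1 (b * t)| := by
          have := abs_sub (iteratedDeriv j a1 t) (b * (b ^ j * iteratedDeriv j a1 (b * t)))
          have habs : |b * (b ^ j * iteratedDeriv j a1 (b * t))| =
              b ^ (j + 1) * |iteratedDeriv j a1 (b * t)| := by
            rw [abs_mul, abs_mul, abs_of_pos hb, abs_of_pos (pow_pos hb j), pow_succ]
            ring
          calc |iteratedDeriv j a1 t - b * (b ^ j * iteratedDeriv j a1 (b * t))|
              ≤ |iteratedDeriv j a1 t| + |b * (b ^ j * iteratedDeriv j a1 (b * t))| :=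
                abs_sub _ _
            _ = _ := by rw [habs]
      _ ≤ C / (1 + t) ^ (j + 1) + b ^ (j + 1) * (C * c ^ (j + 1) / (1 + t) ^ (j + 1)) :=
          add_le_add hb1 (mul_le_mul_of_nonneg_left (hb2.trans hb3) (by positivity))
      _ = (C + b ^ (j + 1) * (C * c ^ (j + 1))) / (1 + t) ^ (j + 1) := by
          field_simp
  -- main claim by strong induction
  have key : ∀ n : ℕ, ∃ C : ℝ, 0 ≤ C ∧ ∀ t : ℝ, 0 ≤ t →
      |iteratedDeriv n (fun s => φ s / φ (b * s)) t| ≤ C / (1 + t) ^ n := by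
    intro n
    induction n using Nat.strong_induction_on with
    | _ n IH =>
      match n with
      | 0 =>
        obtain ⟨M, hM⟩ := hbdd b hb
        refine ⟨max M 0, le_max_right _ _, fun t ht => ?_⟩
        rw [iteratedDeriv_zero, pow_zero, div_one,
          abs_of_pos (div_pos (hpos t) (hpos _))]
        exact (hM t ht).trans (le_max_left _ _)
      | (m + 1) =>
        have IH2 : ∀ i : ℕ, i ≤ m → ∃ C : ℝ, 0 ≤ C ∧ ∀ t : ℝ, 0 ≤ t →
            |iteratedDeriv i (fun s => φ s / φ (b * s)) t| ≤ C / (1 + t) ^ i :=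
          fun i hi => IH i (Nat.lt_succ_of_le hi)
        choose! Cs hCs0 hCsbd using IH2
        choose Cg hCg0 hCgbd using hgbd
        set D : ℝ := ∑ i ∈ Finset.range (m + 1),
          (m.choose i : ℝ) * Cg i * Cs (m - i) with hDdef
        have hD0 : 0 ≤ D := by
          refine Finset.sum_nonneg fun i hi => ?_
          have him : i ≤ m := Nat.lt_succ_iff.mp (Finset.mem_range.mp hi)
          have : m - i ≤ m := Nat.sub_le _ _
          have h1 := hCg0 i
          have h2 := hCs0 (m - i) this
          positivity
        refine ⟨D, hD0, fun t ht => ?_⟩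
        have ht1 : (0 : ℝ) < 1 + t := by linarith
        have e0 : iteratedDeriv (m + 1) (fun s => φ s / φ (b * s)) t =
            iteratedDeriv m (fun y => g y * (φ y / φ (b * y))) t := by
          rw [iteratedDeriv_succ', hderiv]
        rw [e0]
        have hcd1 : ContDiff ℝ (m : WithTop ℕ∞) g := hg.of_le (hle m)
        have hcd2 : ContDiff ℝ (m : WithTop ℕ∞) (fun s => φ s / φ (b * s)) :=
          hσ.of_le (hle m)
        have hmulle := norm_iteratedFDeriv_mul_le (𝕜 := ℝ) hcd1 hcd2 t
          (le_refl (m : WithTop ℕ∞))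
        have habs : |iteratedDeriv m (fun y => g y * (φ y / φ (b * y))) t| =
            ‖iteratedFDeriv ℝ m (fun y => g y * (φ y / φ (b * y))) t‖ := by
          rw [norm_iteratedFDeriv_eq_norm_iteratedDeriv, Real.norm_eq_abs]
        rw [habs]
        refine hmulle.trans ?_
        have hterm : ∀ i ∈ Finset.range (m + 1),
            (m.choose i : ℝ) * ‖iteratedFDeriv ℝ i g t‖ *
              ‖iteratedFDeriv ℝ (m - i) (fun s => φ s / φ (b * s)) t‖ ≤
            (m.choose i : ℝ) * Cg i * Cs (m - i) / (1 + t) ^ (m + 1) := by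
          intro i hi
          have him : i ≤ m := Nat.lt_succ_iff.mp (Finset.mem_range.mp hi)
          have hg_i : ‖iteratedFDeriv ℝ i g t‖ ≤ Cg i / (1 + t) ^ (i + 1) := by
            rw [norm_iteratedFDeriv_eq_norm_iteratedDeriv, Real.norm_eq_abs]
            exact hCgbd i t ht
          have hσ_i : ‖iteratedFDeriv ℝ (m - i) (fun s => φ s / φ (b * s)) t‖ ≤
              Cs (m - i) / (1 + t) ^ (m - i) := by
            rw [norm_iteratedFDeriv_eq_norm_iteratedDeriv, Real.norm_eq_abs]
            exact hCsbd (m - i) (Nat.sub_le _ _) t ht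
          have hpowe : (1 + t) ^ (i + 1) * (1 + t) ^ (m - i) = (1 + t) ^ (m + 1) := by
            rw [← pow_add]
            congr 1
            omega
          calc (m.choose i : ℝ) * ‖iteratedFDeriv ℝ i g t‖ *
                ‖iteratedFDeriv ℝ (m - i) (fun s => φ s / φ (b * s)) t‖
              ≤ (m.choose i : ℝ) * (Cg i / (1 + t) ^ (i + 1)) *
                (Cs (m - i) / (1 + t) ^ (m - i)) := by
                have hCgi := hCg0 i
                have hCsi := hCs0 (m - i) (Nat.sub_le _ _)
                exact mul_le_mul (mul_le_mul_of_nonneg_left hg_i (by positivity)) hσ_i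
                  (norm_nonneg _) (by positivity)
            _ = (m.choose i : ℝ) * Cg i * Cs (m - i) /
                ((1 + t) ^ (i + 1) * (1 + t) ^ (m - i)) := by
                field_simp
            _ = (m.choose i : ℝ) * Cg i * Cs (m - i) / (1 + t) ^ (m + 1) := by
                rw [hpowe]
        calc (∑ i ∈ Finset.range (m + 1), (m.choose i : ℝ) * ‖iteratedFDeriv ℝ i g t‖ *
              ‖iteratedFDeriv ℝ (m - i) (fun s => φ s / φ (b * s)) t‖)
            ≤ ∑ i ∈ Finset.range (m + 1),
              (m.choose i : ℝ) * Cg i * Cs (m - i) / (1 + t) ^ (m + 1) :=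
              Finset.sum_le_sum hterm
          _ = D / (1 + t) ^ (m + 1) := by
              rw [hDdef, Finset.sum_div]
  obtain ⟨C, hC0, hC⟩ := key k
  refine ⟨C + 1, by linarith, fun t ht => ?_⟩
  refine (hC t ht).trans ?_
  have ht1 : (0 : ℝ) < 1 + t := by linarith
  gcongr
  linarith
end

section
/- The function s ↦ ∑_{n=1}^∞ (log n / n)^s, defined for real s > 1, satisfies lim_{s→1+} (s−1)² ∑_{n=1}^∞ (log n / n)^s = 1. -/
/-!
The function `t ↦ (log t / t) ^ s` is bounded by `1` on `[1, ∞)` and decreasing beyond `e`, so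
the series differs from `∫₁^∞ (log t / t) ^ s dt` by a bounded amount, which `(s - 1) ^ 2` kills.
The substitution `t = eᵘ` turns the integral into `∫₀^∞ uˢ e^{-(s-1)u} du = (s-1)^{-(s+1)} Γ(s+1)`,
and `(s - 1) ^ 2` times this is `(s-1)^{-(s-1)} Γ(s+1) → Γ(2) = 1`.
-/

open Filter Set MeasureTheory Topology Real

theorem AntitoneOn.abs_tsum_sub_integral_le {f : ℝ → ℝ} {N : ℕ} {C : ℝ}
    (anti : AntitoneOn f (Ici N)) (integrable : IntegrableOn f (Ioi 0))
    (nonneg : ∀ t ∈ Ici (0 : ℝ), 0 ≤ f t) (bound : ∀ t ∈ Icc (0 : ℝ) N, f t ≤ C) :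
    |∑' n : ℕ, f n - ∫ t in Ioi 0, f t| ≤ (N + 1) * C := by
  have hN : (0 : ℝ) ≤ N := N.cast_nonneg
  have nonneg_tail : ∀ t ∈ Ioi (N : ℝ), 0 ≤ f t := fun t ht => nonneg t (hN.trans ht.out.le)
  have summable : Summable fun n : ℕ => f n :=
    anti.summable_of_integrableOn_Ioi (integrable.mono_set (Ioi_subset_Ioi hN)) nonneg_tail
  have split_sum := summable.sum_add_tsum_nat_add N
  have split_integral :
      (∫ t in Ioc 0 (N : ℝ), f t) + ∫ t in Ioi (N : ℝ), f t = ∫ t in Ioi 0, f t := by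
    rw [← setIntegral_union (Ioc_disjoint_Ioi le_rfl) measurableSet_Ioi
      (integrable.mono_set Ioc_subset_Ioi_self) (integrable.mono_set (Ioi_subset_Ioi hN)),
      Ioc_union_Ioi_eq_Ioi hN]
  have tail_lower := anti.integral_le_tsum_comp_add N summable nonneg_tail
  have tail_upper : ∑' n : ℕ, f ↑(n + N) ≤ f N + ∫ t in Ioi (N : ℝ), f t := by
    rw [((summable_nat_add_iff N).2 summable).tsum_eq_zero_add]
    simpa [add_right_comm] using anti.tsum_comp_add_le_integral N
      (integrable.mono_set (Ioi_subset_Ioi hN)) nonneg_tail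
  have head_sum_nonneg : 0 ≤ ∑ n ∈ Finset.range N, f n :=
    Finset.sum_nonneg fun n _ => nonneg _ (mem_Ici.2 n.cast_nonneg)
  have head_sum_le : ∑ n ∈ Finset.range N, f n ≤ N * C := by
    simpa using Finset.sum_le_card_nsmul (Finset.range N) (fun n : ℕ => f n) C fun n hn =>
      bound _ ⟨n.cast_nonneg, by exact_mod_cast (Finset.mem_range.1 hn).le⟩
  have head_integral_nonneg : 0 ≤ ∫ t in Ioc 0 (N : ℝ), f t :=
    setIntegral_nonneg measurableSet_Ioc fun t ht => nonneg t ht.1.le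
  have head_integral_le : ∫ t in Ioc 0 (N : ℝ), f t ≤ N * C := by
    calc ∫ t in Ioc 0 (N : ℝ), f t ≤ ∫ _ in Ioc 0 (N : ℝ), C :=
          setIntegral_mono_on (integrable.mono_set Ioc_subset_Ioi_self)
            (integrableOn_const measure_Ioc_lt_top.ne) measurableSet_Ioc
            fun t ht => bound t (Ioc_subset_Icc_self ht)
      _ = N * C := by simp
  have f_N_le : f N ≤ C := bound N ⟨hN, le_rfl⟩
  rw [abs_sub_le_iff]
  constructor <;> linarith

theorem integral_comp_add_right_Ioi {E : Type*} [NormedAddCommGroup E] [NormedSpace ℝ E]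
    (f : ℝ → E) (a c : ℝ) : ∫ t in Ioi a, f (t + c) = ∫ t in Ioi (a + c), f t := by
  simpa [preimage_add_const_Ioi] using
    (measurePreserving_add_right volume c).setIntegral_preimage_emb
      (measurableEmbedding_addRight c) f (Ioi (a + c))

theorem integrableOn_Ioi_comp_add_right_iff {E : Type*} [NormedAddCommGroup E]
    (f : ℝ → E) (a c : ℝ) :
    IntegrableOn (fun t => f (t + c)) (Ioi a) ↔ IntegrableOn f (Ioi (a + c)) := by
  have h := (measurePreserving_add_right volume c).integrableOn_comp_preimage
    (measurableEmbedding_addRight c) (f := f) (s := Ioi (a + c))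
  rwa [preimage_add_const_Ioi, add_sub_cancel_right] at h

section LogDivSelfRpow

variable {s t : ℝ}

lemma log_div_self_rpow_nonneg (ht : 1 ≤ t) : 0 ≤ (log t / t) ^ s :=
  rpow_nonneg (div_nonneg (log_nonneg ht) (by linarith)) s

lemma log_div_self_rpow_le_one (hs : 0 ≤ s) (ht : 1 ≤ t) : (log t / t) ^ s ≤ 1 :=
  rpow_le_one (div_nonneg (log_nonneg ht) (by linarith))
    (div_le_one_of_le₀ (log_le_self (by linarith)) (by linarith)) hs

lemma antitoneOn_log_div_self_rpow (hs : 0 ≤ s) :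
    AntitoneOn (fun t => (log t / t) ^ s) (Ici (exp 1)) := fun x hx y hy hxy =>
  have hy1 : 1 ≤ y := (one_le_exp zero_le_one).trans hy
  rpow_le_rpow (div_nonneg (log_nonneg hy1) (by linarith)) (log_div_self_antitoneOn hx hy hxy) hs

lemma exp_mul_log_div_self_rpow_exp {u : ℝ} (hu : 0 ≤ u) :
    exp u * (log (exp u) / exp u) ^ s = u ^ s * exp (-((s - 1) * u)) := by
  rw [log_exp, div_rpow hu (exp_pos u).le, ← exp_mul, div_eq_mul_inv, ← exp_neg, mul_left_comm,
    ← exp_add]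
  ring_nf

lemma integrableOn_log_div_self_rpow (hs : 1 < s) :
    IntegrableOn (fun t => (log t / t) ^ s) (Ioi 1) := by
  rw [← exp_zero, ← integrableOn_comp_exp_Ioi]
  refine (integrableOn_rpow_mul_exp_neg_mul_rpow (p := 1) (b := s - 1) (by linarith) one_pos
    (by linarith)).congr_fun (fun u hu => ?_) measurableSet_Ioi
  dsimp only
  rw [smul_eq_mul, exp_mul_log_div_self_rpow_exp hu.out.le, rpow_one, neg_mul]

lemma integral_log_div_self_rpow (hs : 1 < s) :
    ∫ t in Ioi 1, (log t / t) ^ s = (1 / (s - 1)) ^ (s + 1) * Gamma (s + 1) := by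
  have h := integral_comp_exp_Ioi (fun t => (log t / t) ^ s) 0
  rw [exp_zero] at h
  rw [← h, ← integral_rpow_mul_exp_neg_mul_Ioi (by linarith) (by linarith)]
  refine setIntegral_congr_fun measurableSet_Ioi fun u hu => ?_
  rw [smul_eq_mul, exp_mul_log_div_self_rpow_exp hu.out.le, add_sub_cancel_right]

lemma abs_tsum_log_div_self_rpow_sub_le (hs : 1 < s) :
    |∑' n : ℕ, (log (n + 1) / (n + 1)) ^ s - (1 / (s - 1)) ^ (s + 1) * Gamma (s + 1)| ≤ 3 := by
  have exp_one_le : exp 1 ≤ 3 := by linarith [exp_one_lt_d9]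
  have h := AntitoneOn.abs_tsum_sub_integral_le (f := fun t => (log (t + 1) / (t + 1)) ^ s)
    (N := 2) (C := 1)
    (fun x hx y hy hxy => antitoneOn_log_div_self_rpow (by linarith)
      (by simp only [mem_Ici, Nat.cast_ofNat] at hx ⊢; linarith)
      (by simp only [mem_Ici, Nat.cast_ofNat] at hy ⊢; linarith) (by linarith))
    ((integrableOn_Ioi_comp_add_right_iff (fun t => (log t / t) ^ s) 0 1).2
      (by simpa using integrableOn_log_div_self_rpow hs))
    (fun t ht => log_div_self_rpow_nonneg (by linarith [ht.out]))
    (fun t ht => log_div_self_rpow_le_one (by linarith) (by linarith [ht.1]))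
  rw [integral_comp_add_right_Ioi (fun t => (log t / t) ^ s), zero_add,
    integral_log_div_self_rpow hs] at h
  exact h.trans_eq (by norm_num)

end LogDivSelfRpow

lemma tendsto_sub_one_sq_mul_Gamma :
    Tendsto (fun s : ℝ => (s - 1) ^ 2 * ((1 / (s - 1)) ^ (s + 1) * Gamma (s + 1)))
      (𝓝[>] 1) (𝓝 1) := by
  -- `(s - 1) ^ (1 - s) = exp (negMulLog (s - 1))` extends continuously to `s = 1`.
  have hcont : ContinuousAt (fun s : ℝ => exp (negMulLog (s - 1)) * Gamma (s + 1)) 1 := by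
    have hGamma : ContinuousAt (fun s : ℝ => Gamma (s + 1)) 1 :=
      (differentiableAt_Gamma fun m h => by linarith [m.cast_nonneg (α := ℝ)]).continuousAt.comp
        (continuous_add_const 1).continuousAt
    have hexp : Continuous fun s : ℝ => exp (negMulLog (s - 1)) := by fun_prop
    exact hexp.continuousAt.mul hGamma
  have value_at_one : exp (negMulLog (1 - 1)) * Gamma (1 + 1) = 1 := by norm_num
  refine (value_at_one ▸ hcont.tendsto.mono_left nhdsWithin_le_nhds).congr' ?_
  filter_upwards [self_mem_nhdsWithin] with s hs
  have hr : 0 < s - 1 := sub_pos.2 hs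
  rw [← mul_assoc, one_div, inv_rpow hr.le, ← rpow_neg hr.le, ← rpow_natCast, ← rpow_add hr,
    rpow_def_of_pos hr, negMulLog]
  congr 2
  push_cast
  ring

/-- **Remark.** The zeta-type function `s ↦ ∑_{n=1}^∞ (log n / n)^s` (for real
`s > 1`) satisfies `lim_{s→1+} (s-1)² ∑_{n=1}^∞ (log n / n)^s = 1`. -/
theorem tendsto_zeta_log_over_n :
    Tendsto
      (fun s : ℝ => (s - 1) ^ 2 *
        ∑' n : ℕ, (Real.log (n + 1) / (n + 1)) ^ s)
      (nhdsWithin 1 (Ioi 1)) (nhds 1) := by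
  have error_vanishes : Tendsto (fun s : ℝ => (s - 1) ^ 2 *
      (∑' n : ℕ, (log (n + 1) / (n + 1)) ^ s - (1 / (s - 1)) ^ (s + 1) * Gamma (s + 1)))
      (𝓝[>] 1) (𝓝 0) := by
    have bound_vanishes : Tendsto (fun s : ℝ => (s - 1) ^ 2 * 3) (𝓝[>] 1) (𝓝 0) := by
      have : Continuous fun s : ℝ => (s - 1) ^ 2 * 3 := by fun_prop
      simpa using (this.tendsto 1).mono_left nhdsWithin_le_nhds
    refine squeeze_zero_norm' ?_ bound_vanishes
    filter_upwards [self_mem_nhdsWithin] with s hs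
    rw [norm_mul, norm_pow, Real.norm_eq_abs, sq_abs]
    exact mul_le_mul_of_nonneg_left (abs_tsum_log_div_self_rpow_sub_le hs) (sq_nonneg _)
  simpa using (tendsto_sub_one_sq_mul_Gamma.add error_vanishes).congr fun s => by ring
end

section
/- Let φ be decreasing and regularly varying of index −1, V a positive bounded operator, and G a Hilbert–Schmidt operator which is spectrally φ-modulated with respect to V, i.e. sup_{t>0} φ(t)^{−1/2} ‖G E_V[0,t^{−1}]‖_{HS} < ∞. Then G is strongly φ-modulated with respect to V: sup_{t>0} φ(t)^{−1/2} ‖G(1+tV)^{−1}‖_{HS} < ∞. -/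
/-!
Write `f t = ‖G (1 + tV)⁻¹‖_HS`, `τ = t/64` and `P = E_V[0, τ⁻¹]`. Then
`(1 + tV)⁻¹ = P (1 + tV)⁻¹ + (1 + τV)⁻¹ · (1 + τV)(1 - P)(1 + tV)⁻¹`,
and since `V ≥ τ⁻¹` on the range of `1 - P`, the last factor has norm at most `1/32`. The
Hilbert–Schmidt norm defined through approximation numbers satisfies the quasi-triangle
inequality with constant `2`, so `f t ≤ 2 ‖G P‖_HS + f(τ)/16 ≤ 2 K₀ √φ(τ) + f(τ)/16`. Regular
variation gives `√φ(τ) ≤ 9 √φ(t)` for large `t`, so a bound `f ≤ K √φ` on `(0, T]`, where it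
holds because `f ≤ ‖G‖_HS` and `φ` is decreasing, propagates along `t ↦ 64 t` to all `t > 0`.
-/

open Filter
open scoped InnerProductSpace

/-- The Hilbert–Schmidt norm of `T`, realized as the `ℓ²`-norm of the singular
values. -/
noncomputable def hsNorm {H : Type*} [NormedAddCommGroup H] [InnerProductSpace ℂ H]
    (T : H →L[ℂ] H) : ℝ :=
  Real.sqrt (∑' k, approxNum T k ^ 2)

section ApproxNum

variable {H : Type*} [NormedAddCommGroup H] [InnerProductSpace ℂ H]

lemma approxNum_le_norm_sub (T : H →L[ℂ] H) {A : H →L[ℂ] H} {n : ℕ}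
    (hfin : FiniteDimensional ℂ (LinearMap.range (A : H →ₗ[ℂ] H)))
    (hrank : Module.finrank ℂ (LinearMap.range (A : H →ₗ[ℂ] H)) ≤ n) :
    approxNum T n ≤ ‖T - A‖ :=
  csInf_le ⟨0, by rintro x ⟨B, -, rfl⟩; positivity⟩ ⟨A, ⟨hfin, hrank⟩, rfl⟩

lemma exists_norm_sub_lt_approxNum_add (T : H →L[ℂ] H) (n : ℕ) {ε : ℝ} (hε : 0 < ε) :
    ∃ A : H →L[ℂ] H, FiniteDimensional ℂ (LinearMap.range (A : H →ₗ[ℂ] H)) ∧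
      Module.finrank ℂ (LinearMap.range (A : H →ₗ[ℂ] H)) ≤ n ∧
      ‖T - A‖ < approxNum T n + ε := by
  have hzero : FiniteDimensional ℂ (LinearMap.range ((0 : H →L[ℂ] H) : H →ₗ[ℂ] H)) ∧
      Module.finrank ℂ (LinearMap.range ((0 : H →L[ℂ] H) : H →ₗ[ℂ] H)) ≤ n := by
    rw [ContinuousLinearMap.toLinearMap_zero, LinearMap.range_zero, finrank_bot]
    exact ⟨inferInstance, n.zero_le⟩
  have hne : ((fun A : H →L[ℂ] H => ‖T - A‖) ''
      {A | FiniteDimensional ℂ (LinearMap.range (A : H →ₗ[ℂ] H)) ∧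
        Module.finrank ℂ (LinearMap.range (A : H →ₗ[ℂ] H)) ≤ n}).Nonempty :=
    ⟨_, 0, hzero, rfl⟩
  obtain ⟨_, ⟨A, ⟨hfin, hrank⟩, rfl⟩, hA⟩ :=
    exists_lt_of_csInf_lt hne (lt_add_of_pos_right (approxNum T n) hε)
  exact ⟨A, hfin, hrank, hA⟩

lemma approxNum_nonneg (T : H →L[ℂ] H) (n : ℕ) : 0 ≤ approxNum T n := by
  refine le_of_forall_pos_lt_add fun ε hε => ?_
  obtain ⟨A, -, -, hA⟩ := exists_norm_sub_lt_approxNum_add T n hε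
  exact (norm_nonneg _).trans_lt hA

lemma approxNum_antitone (T : H →L[ℂ] H) : Antitone (approxNum T) := by
  intro n m hnm
  refine le_of_forall_pos_lt_add fun ε hε => ?_
  obtain ⟨A, hfin, hrank, hA⟩ := exists_norm_sub_lt_approxNum_add T n hε
  exact (approxNum_le_norm_sub T hfin (hrank.trans hnm)).trans_lt hA

lemma approxNum_comp_le (T S : H →L[ℂ] H) (n : ℕ) :
    approxNum (T.comp S) n ≤ approxNum T n * ‖S‖ := by
  refine le_of_forall_pos_lt_add fun ε hε => ?_
  obtain ⟨A, hfin, hrank, hA⟩ :=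
    exists_norm_sub_lt_approxNum_add T n (div_pos hε (by positivity : 0 < ‖S‖ + 1))
  have hrange : LinearMap.range ((A.comp S : H →L[ℂ] H) : H →ₗ[ℂ] H) ≤
      LinearMap.range (A : H →ₗ[ℂ] H) := LinearMap.range_comp_le_range _ _
  have hsmall : ε / (‖S‖ + 1) * ‖S‖ < ε := by
    rw [div_mul_eq_mul_div, div_lt_iff₀ (by positivity)]
    nlinarith
  calc approxNum (T.comp S) n ≤ ‖T.comp S - A.comp S‖ :=
        approxNum_le_norm_sub _ (Submodule.finiteDimensional_of_le hrange)
          ((Submodule.finrank_mono hrange).trans hrank)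
    _ ≤ ‖T - A‖ * ‖S‖ := by
        rw [← ContinuousLinearMap.sub_comp]; exact ContinuousLinearMap.opNorm_comp_le _ _
    _ ≤ (approxNum T n + ε / (‖S‖ + 1)) * ‖S‖ := by gcongr
    _ < approxNum T n * ‖S‖ + ε := by rw [add_mul]; linarith

lemma approxNum_add_le (T T' : H →L[ℂ] H) (n m : ℕ) :
    approxNum (T + T') (n + m) ≤ approxNum T n + approxNum T' m := by
  refine le_of_forall_pos_lt_add fun ε hε => ?_
  obtain ⟨A, hfin, hrank, hA⟩ := exists_norm_sub_lt_approxNum_add T n (half_pos hε)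
  obtain ⟨A', hfin', hrank', hA'⟩ := exists_norm_sub_lt_approxNum_add T' m (half_pos hε)
  have hrange : LinearMap.range (((A + A') : H →L[ℂ] H) : H →ₗ[ℂ] H) ≤
      LinearMap.range (A : H →ₗ[ℂ] H) ⊔ LinearMap.range (A' : H →ₗ[ℂ] H) := by
    rintro x ⟨y, rfl⟩
    exact Submodule.add_mem_sup ⟨y, rfl⟩ ⟨y, rfl⟩
  calc approxNum (T + T') (n + m) ≤ ‖(T + T') - (A + A')‖ :=
        approxNum_le_norm_sub _ (Submodule.finiteDimensional_of_le hrange)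
          ((Submodule.finrank_mono hrange).trans
            ((Submodule.finrank_add_le_finrank_add_finrank _ _).trans (add_le_add hrank hrank')))
    _ ≤ ‖T - A‖ + ‖T' - A'‖ := by rw [add_sub_add_comm]; exact norm_add_le _ _
    _ < approxNum T n + approxNum T' m + ε := by linarith

end ApproxNum

section HilbertSchmidt

variable {H : Type*} [NormedAddCommGroup H] [InnerProductSpace ℂ H]

lemma summable_approxNum_comp {T : H →L[ℂ] H} (hT : Summable fun k => approxNum T k ^ 2)
    (S : H →L[ℂ] H) : Summable fun k => approxNum (T.comp S) k ^ 2 := by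
  refine Summable.of_nonneg_of_le (fun k => by positivity) (fun k => ?_) (hT.mul_right (‖S‖ ^ 2))
  rw [← mul_pow]
  exact pow_le_pow_left₀ (approxNum_nonneg _ _) (approxNum_comp_le T S k) 2

lemma hsNorm_nonneg (T : H →L[ℂ] H) : 0 ≤ hsNorm T := Real.sqrt_nonneg _

lemma hsNorm_comp_le {T : H →L[ℂ] H} (hT : Summable fun k => approxNum T k ^ 2)
    (S : H →L[ℂ] H) : hsNorm (T.comp S) ≤ hsNorm T * ‖S‖ := by
  have hsum : ∑' k, approxNum (T.comp S) k ^ 2 ≤ (∑' k, approxNum T k ^ 2) * ‖S‖ ^ 2 := by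
    rw [← tsum_mul_right]
    refine (summable_approxNum_comp hT S).tsum_le_tsum (fun k => ?_) (hT.mul_right _)
    rw [← mul_pow]
    exact pow_le_pow_left₀ (approxNum_nonneg _ _) (approxNum_comp_le T S k) 2
  calc hsNorm (T.comp S) ≤ Real.sqrt ((∑' k, approxNum T k ^ 2) * ‖S‖ ^ 2) :=
        Real.sqrt_le_sqrt hsum
    _ = hsNorm T * ‖S‖ := by rw [Real.sqrt_mul (tsum_nonneg fun k => by positivity),
        Real.sqrt_sq (norm_nonneg S), hsNorm]

lemma approxNum_add_le_half (A B : H →L[ℂ] H) (n : ℕ) :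
    approxNum (A + B) n ≤ approxNum A (n / 2) + approxNum B (n / 2) :=
  (approxNum_antitone _ (by omega : n / 2 + n / 2 ≤ n)).trans (approxNum_add_le A B _ _)

lemma hsNorm_add_le {A B : H →L[ℂ] H} (hA : Summable fun k => approxNum A k ^ 2)
    (hB : Summable fun k => approxNum B k ^ 2) :
    hsNorm (A + B) ≤ 2 * (hsNorm A + hsNorm B) := by
  set a := ∑' k, approxNum A k ^ 2
  set b := ∑' k, approxNum B k ^ 2
  set g : ℕ → ℝ := fun n => 2 * (approxNum A (n / 2) ^ 2 + approxNum B (n / 2) ^ 2)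
  have hpair : HasSum (fun k => 2 * (approxNum A k ^ 2 + approxNum B k ^ 2)) (2 * (a + b)) :=
    (hA.hasSum.add hB.hasSum).mul_left 2
  have hg : HasSum g (4 * (a + b)) := by
    have h := HasSum.even_add_odd (f := g) (by simpa [g] using hpair)
      (by simpa [g, Nat.mul_add_div] using hpair)
    convert h using 1
    ring
  have hle : ∀ n, approxNum (A + B) n ^ 2 ≤ g n := fun n => by
    have h := pow_le_pow_left₀ (approxNum_nonneg _ _) (approxNum_add_le_half A B n) 2
    nlinarith [sq_nonneg (approxNum A (n / 2) - approxNum B (n / 2))]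
  have hsum : ∑' n, approxNum (A + B) n ^ 2 ≤ 4 * (a + b) :=
    hasSum_le hle (Summable.of_nonneg_of_le (fun n => by positivity) hle hg.summable).hasSum hg
  have ha : 0 ≤ a := tsum_nonneg fun k => by positivity
  have hb : 0 ≤ b := tsum_nonneg fun k => by positivity
  calc hsNorm (A + B) ≤ Real.sqrt (4 * (a + b)) := Real.sqrt_le_sqrt hsum
    _ ≤ 2 * (Real.sqrt a + Real.sqrt b) := Real.sqrt_le_iff.mpr ⟨by positivity, by
        nlinarith [Real.sq_sqrt ha, Real.sq_sqrt hb,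
          mul_nonneg (Real.sqrt_nonneg a) (Real.sqrt_nonneg b)]⟩

end HilbertSchmidt

lemma Commute.one_sub_left_one_add_smul_right {R A : Type*} [CommSemiring R] [Ring A]
    [Algebra R A] {p v : A} (h : Commute p v) (a : R) : Commute (1 - p) (1 + a • v) :=
  (Commute.one_right _).add_right (((Commute.one_left v).sub_left h).smul_right a)

section Resolvent

variable {H : Type*} [NormedAddCommGroup H] [InnerProductSpace ℂ H]

lemma one_add_mul_mul_norm_le {V : H →L[ℂ] H} {t s : ℝ} (ht : 0 ≤ t) {w z : H}
    (hwz : w + (t : ℂ) • V w = z) (hVw : s * ‖w‖ ^ 2 ≤ (⟪V w, w⟫_ℂ).re) :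
    (1 + t * s) * ‖w‖ ≤ ‖z‖ := by
  have hre : (⟪z, w⟫_ℂ).re = ‖w‖ ^ 2 + t * (⟪V w, w⟫_ℂ).re := by
    rw [← hwz, inner_add_left, inner_smul_left, inner_self_eq_norm_sq_to_K]
    simp [← Complex.ofReal_pow]
  have hzw : (⟪z, w⟫_ℂ).re ≤ ‖z‖ * ‖w‖ := re_inner_le_norm (𝕜 := ℂ) z w
  have key : (1 + t * s) * ‖w‖ * ‖w‖ ≤ ‖z‖ * ‖w‖ := by
    nlinarith [mul_le_mul_of_nonneg_left hVw ht]
  rcases (norm_nonneg w).eq_or_lt with h | h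
  · rw [← h, mul_zero]
    exact norm_nonneg z
  · exact le_of_mul_le_mul_right key h

lemma apply_add_smul_apply_eq {V R S : H →L[ℂ] H} {a : ℂ} (h : (1 + a • V) * R = S)
    (x : H) : R x + a • V (R x) = S x := by
  simpa using DFunLike.congr_fun h x

lemma norm_le_one_of_one_add_smul_mul_eq_one {V R : H →L[ℂ] H} (hV : V.IsPositive) {t : ℝ}
    (ht : 0 ≤ t) (hR : (1 + (t : ℂ) • V) * R = 1) : ‖R‖ ≤ 1 :=
  R.opNorm_le_bound zero_le_one fun x => by
    simpa using one_add_mul_mul_norm_le (s := 0) ht (apply_add_smul_apply_eq hR x)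
      (by simpa using hV.re_inner_nonneg_left (R x))

variable [CompleteSpace H]

lemma norm_one_sub_mul_le {V P R : H →L[ℂ] H} {t s : ℝ} (hP : IsStarProjection P)
    (hPV : Commute P V) (hker : ∀ x, P x = 0 → s * ‖x‖ ^ 2 ≤ (⟪V x, x⟫_ℂ).re)
    (ht : 0 ≤ t) (hs : 0 ≤ s) (hR : (1 + (t : ℂ) • V) * R = 1) :
    ‖(1 - P) * R‖ ≤ (1 + t * s)⁻¹ := by
  refine ContinuousLinearMap.opNorm_le_bound _ (by positivity) fun x => ?_
  have hQR : (1 + (t : ℂ) • V) * ((1 - P) * R) = 1 - P := by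
    rw [(hPV.one_sub_left_one_add_smul_right (t : ℂ)).symm.left_comm, hR, mul_one]
  have hPQ : P * ((1 - P) * R) = 0 := by rw [← mul_assoc, hP.mul_one_sub_self, zero_mul]
  have h := one_add_mul_mul_norm_le ht (apply_add_smul_apply_eq hQR x)
    (hker _ (DFunLike.congr_fun hPQ x))
  rw [← div_eq_inv_mul, le_div_iff₀' (by positivity)]
  exact h.trans ((1 - P).le_of_opNorm_le hP.one_sub.norm_le x |>.trans_eq (one_mul _))

lemma norm_one_add_smul_mul_one_sub_mul_le {V P R : H →L[ℂ] H} {t s c : ℝ}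
    (hP : IsStarProjection P) (hPV : Commute P V)
    (hker : ∀ x, P x = 0 → s * ‖x‖ ^ 2 ≤ (⟪V x, x⟫_ℂ).re)
    (ht : 0 ≤ t) (hs : 0 ≤ s) (hc₀ : 0 ≤ c) (hc₁ : c ≤ 1) (hR : (1 + (t : ℂ) • V) * R = 1) :
    ‖(1 + ((c * t : ℝ) : ℂ) • V) * ((1 - P) * R)‖ ≤ c + (1 + t * s)⁻¹ := by
  have hsplit : (1 + ((c * t : ℝ) : ℂ) • V) * ((1 - P) * R) =
      ((1 - c : ℝ) : ℂ) • ((1 - P) * R) + (c : ℂ) • (1 - P) := by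
    have h : (1 + ((c * t : ℝ) : ℂ) • V) = ((1 - c : ℝ) : ℂ) • 1 + (c : ℂ) • (1 + (t : ℂ) • V) := by
      push_cast
      module
    rw [h, add_mul, smul_mul_assoc, one_mul, smul_mul_assoc,
      (hPV.one_sub_left_one_add_smul_right (t : ℂ)).symm.left_comm, hR, mul_one]
  rw [hsplit]
  refine (norm_add_le _ _).trans ?_
  rw [norm_smul, norm_smul, Complex.norm_real, Complex.norm_real, Real.norm_of_nonneg hc₀,
    Real.norm_of_nonneg (sub_nonneg.2 hc₁)]
  have h₁ := norm_one_sub_mul_le hP hPV hker ht hs hR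
  have h₂ := hP.one_sub.norm_le
  have h₃ : 0 ≤ (1 + t * s)⁻¹ := by positivity
  nlinarith

end Resolvent

lemma hsNorm_mul_resolvent_le {H : Type*} [NormedAddCommGroup H] [InnerProductSpace ℂ H]
    [CompleteSpace H] {G V P R R' : H →L[ℂ] H} {t c : ℝ}
    (hG : Summable fun k => approxNum G k ^ 2) (hV : V.IsPositive)
    (hP : IsStarProjection P) (hPV : Commute P V)
    (hker : ∀ x, P x = 0 → (c * t)⁻¹ * ‖x‖ ^ 2 ≤ (⟪V x, x⟫_ℂ).re)
    (ht : 0 < t) (hc₀ : 0 < c) (hc₁ : c ≤ 1)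
    (hR : (1 + (t : ℂ) • V) * R = 1) (hR' : R' * (1 + ((c * t : ℝ) : ℂ) • V) = 1) :
    hsNorm (G.comp R) ≤ 2 * hsNorm (G.comp P) + 4 * c * hsNorm (G.comp R') := by
  set X := (1 + ((c * t : ℝ) : ℂ) • V) * ((1 - P) * R)
  have hR'X : R' * X = (1 - P) * R := by rw [← mul_assoc, hR', one_mul]
  have hdecomp : G * R = G * P * R + G * R' * X := by
    rw [mul_assoc G R' X, hR'X]
    noncomm_ring
  have hX : ‖X‖ ≤ 2 * c := by
    refine (norm_one_add_smul_mul_one_sub_mul_le hP hPV hker ht.le (by positivity) hc₀.le hc₁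
      hR).trans ?_
    rw [mul_inv, mul_left_comm, mul_inv_cancel₀ ht.ne', mul_one, two_mul, add_le_add_iff_left,
      inv_le_comm₀ (by positivity) hc₀]
    linarith
  have hGP : Summable fun k => approxNum (G * P) k ^ 2 := summable_approxNum_comp hG P
  have hGR' : Summable fun k => approxNum (G * R') k ^ 2 := summable_approxNum_comp hG R'
  calc hsNorm (G * R)
      ≤ 2 * (hsNorm (G * P * R) + hsNorm (G * R' * X)) := hdecomp ▸
        hsNorm_add_le (summable_approxNum_comp hGP R) (summable_approxNum_comp hGR' X)
    _ ≤ 2 * (hsNorm (G * P) * ‖R‖ + hsNorm (G * R') * ‖X‖) := by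
        gcongr
        exacts [hsNorm_comp_le hGP R, hsNorm_comp_le hGR' X]
    _ ≤ 2 * (hsNorm (G * P) * 1 + hsNorm (G * R') * (2 * c)) := by
        gcongr
        · exact hsNorm_nonneg _
        · exact norm_le_one_of_one_add_smul_mul_eq_one hV ht.le hR
        · exact hsNorm_nonneg _
    _ = 2 * hsNorm (G * P) + 4 * c * hsNorm (G * R') := by ring

lemma forall_pos_of_base_of_step {p : ℝ → Prop} {c T : ℝ} (hc₀ : 0 < c) (hc₁ : c < 1)
    (hT : 0 < T) (hbase : ∀ t, 0 < t → t ≤ T → p t) (hstep : ∀ t, T ≤ t → p (c * t) → p t) :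
    ∀ t, 0 < t → p t := by
  have hlevel : ∀ n : ℕ, ∀ t, 0 < t → t ≤ T * c⁻¹ ^ n → p t := by
    intro n
    induction n with
    | zero => simpa using hbase
    | succ n ih =>
      intro t ht htn
      rcases le_total t T with hle | hle
      · exact hbase t ht hle
      refine hstep t hle (ih _ (mul_pos hc₀ ht) ?_)
      calc c * t ≤ c * (T * c⁻¹ ^ (n + 1)) := by gcongr
        _ = T * c⁻¹ ^ n := by
          rw [pow_succ]
          field_simp
  intro t ht
  obtain ⟨n, hn⟩ := pow_unbounded_of_one_lt (t / T) (one_lt_inv_iff₀.2 ⟨hc₀, hc₁⟩)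
  exact hlevel n t ht ((div_le_iff₀' hT).1 hn.le)

lemma exists_le_mul_sqrt_of_le_add_mul {f φ : ℝ → ℝ} {c T A B q M : ℝ} (hc₀ : 0 < c)
    (hc₁ : c < 1) (hT : 0 < T) (hφpos : ∀ t, 0 ≤ t → 0 < φ t)
    (hφdec : ∀ s t, 0 ≤ s → s ≤ t → φ t ≤ φ s) (hM : 0 ≤ M)
    (hφc : ∀ t, T ≤ t → φ (c * t) ≤ M ^ 2 * φ t) (hq : 0 ≤ q) (hqM : q * M < 1) (hA : 0 ≤ A)
    (hB : 0 ≤ B) (hf : ∀ t, 0 < t → f t ≤ B)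
    (hstep : ∀ t, T ≤ t → f t ≤ A * Real.sqrt (φ (c * t)) + q * f (c * t)) :
    ∃ K, ∀ t, 0 < t → f t ≤ K * Real.sqrt (φ t) := by
  have hsqrtT : 0 < Real.sqrt (φ T) := Real.sqrt_pos.2 (hφpos T hT.le)
  set K₁ := B / Real.sqrt (φ T)
  set K := K₁ + A * M / (1 - q * M)
  have hK₁ : 0 ≤ K₁ := div_nonneg hB hsqrtT.le
  have hK₁K : K₁ ≤ K := le_add_of_nonneg_right (div_nonneg (mul_nonneg hA hM) (by linarith))
  have hKM : (A + q * K) * M ≤ K := by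
    have : A * M = A * M / (1 - q * M) * (1 - q * M) := (div_mul_cancel₀ _ (by linarith)).symm
    nlinarith [mul_nonneg hK₁ (sub_nonneg.2 hqM.le)]
  refine ⟨K, forall_pos_of_base_of_step hc₀ hc₁ hT (fun t ht htT => ?_) (fun t htT ih => ?_)⟩
  · calc f t ≤ K₁ * Real.sqrt (φ T) := (hf t ht).trans_eq (div_mul_cancel₀ _ hsqrtT.ne').symm
      _ ≤ K * Real.sqrt (φ t) := by gcongr; exact hφdec t T ht.le htT
  · have hsqrt : Real.sqrt (φ (c * t)) ≤ M * Real.sqrt (φ t) := by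
      rw [← Real.sqrt_sq hM, ← Real.sqrt_mul (sq_nonneg M)]
      exact Real.sqrt_le_sqrt (hφc t htT)
    calc f t ≤ (A + q * K) * Real.sqrt (φ (c * t)) := by nlinarith [hstep t htT]
      _ ≤ (A + q * K) * (M * Real.sqrt (φ t)) := by gcongr
      _ ≤ K * Real.sqrt (φ t) := by
        rw [← mul_assoc]
        exact mul_le_mul_of_nonneg_right hKM (Real.sqrt_nonneg _)

lemma eventually_le_mul_of_tendsto_div {φ : ℝ → ℝ} {l m : ℝ} (hφ : ∀ᶠ t in atTop, 0 < φ t)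
    (h : Tendsto (fun t => φ (l * t) / φ t) atTop (nhds l⁻¹)) (hm : l⁻¹ < m) :
    ∀ᶠ t in atTop, φ (l * t) ≤ m * φ t :=
  ((h.eventually (eventually_le_nhds hm)).and hφ).mono fun _ h => (div_le_iff₀ h.2).1 h.1

theorem strongly_modulated_of_spectrally_modulated_general
    {H : Type*} [NormedAddCommGroup H] [InnerProductSpace ℂ H] [CompleteSpace H]
    (φ : ℝ → ℝ) (hφpos : ∀ t, 0 ≤ t → 0 < φ t)
    (hφdec : ∀ s t, 0 ≤ s → s ≤ t → φ t ≤ φ s)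
    (hφrv : ∀ l : ℝ, 0 < l →
      Tendsto (fun t => φ (l * t) / φ t) atTop (nhds l⁻¹))
    (V : H →L[ℂ] H) (hV : V.IsPositive)
    (E : ℝ → (H →L[ℂ] H))
    -- `E s` is the spectral projection `E_V[0,s]` of `V`:
    (hEsa : ∀ s : ℝ, 0 ≤ s → IsSelfAdjoint (E s))
    (hEproj : ∀ s : ℝ, 0 ≤ s → (E s).comp (E s) = E s)
    (hEV : ∀ s : ℝ, 0 ≤ s → (E s).comp V = V.comp (E s))
    (hcompl : ∀ s : ℝ, 0 ≤ s → ∀ x : H, E s x = 0 → s * ‖x‖ ^ 2 ≤ (⟪V x, x⟫_ℂ).re)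
    -- `R t` is the resolvent `(1 + t V)⁻¹`:
    (R : ℝ → (H →L[ℂ] H))
    (hR : ∀ t > (0:ℝ), (1 + (t : ℂ) • V).comp (R t) = 1 ∧
      (R t).comp (1 + (t : ℂ) • V) = 1)
    (G : H →L[ℂ] H) (hG : Summable (fun k => approxNum G k ^ 2))
    (hspec : ∃ K₀ : ℝ, ∀ t > (0:ℝ),
      hsNorm (G.comp (E t⁻¹)) ≤ K₀ * Real.sqrt (φ t)) :
    ∃ K : ℝ, ∀ t > (0:ℝ), hsNorm (G.comp (R t)) ≤ K * Real.sqrt (φ t) := by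
  obtain ⟨K₀, hK₀⟩ := hspec
  have hK₀_nonneg : 0 ≤ K₀ := nonneg_of_mul_nonneg_left ((hsNorm_nonneg _).trans (hK₀ 1 one_pos))
    (Real.sqrt_pos.2 (hφpos 1 zero_le_one))
  obtain ⟨T, hT⟩ := eventually_atTop.1 ((eventually_le_mul_of_tendsto_div
    ((eventually_ge_atTop 0).mono hφpos) (hφrv 64⁻¹ (by norm_num))
    (by norm_num : (64⁻¹ : ℝ)⁻¹ < 9 ^ 2)).and (eventually_ge_atTop 1))
  have hT₀ : 0 < T := one_pos.trans_le (hT T le_rfl).2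
  refine exists_le_mul_sqrt_of_le_add_mul (f := fun t => hsNorm (G.comp (R t))) (A := 2 * K₀)
    (q := 16⁻¹) (by norm_num) (by norm_num) hT₀ hφpos hφdec (by norm_num) (fun t ht => (hT t ht).1)
    (by norm_num) (by norm_num) (by positivity) (hsNorm_nonneg G) (fun t ht => ?_) (fun t htT => ?_)
  · exact (hsNorm_comp_le hG _).trans (mul_le_of_le_one_right (hsNorm_nonneg G)
      (norm_le_one_of_one_add_smul_mul_eq_one hV ht.le (hR t ht).1))
  · have ht : 0 < t := hT₀.trans_le htT
    have hs : 0 ≤ (64⁻¹ * t)⁻¹ := by positivity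
    have hstep := hsNorm_mul_resolvent_le hG hV ⟨hEproj _ hs, hEsa _ hs⟩ (hEV _ hs) (hcompl _ hs)
      ht (by norm_num) (by norm_num) (hR t ht).1 (hR (64⁻¹ * t) (by positivity)).2
    linarith [hK₀ (64⁻¹ * t) (by positivity)]

/-- **Lemma (spectrally modulated implies strongly modulated).** Let `φ` be
decreasing and regularly varying of index `-1`, `V` a positive bounded operator
with spectral projections `E s = E_V[0,s]` and resolvents `R t = (1 + tV)⁻¹`.
If `G` is a Hilbert–Schmidt operator with
`sup_{t>0} φ(t)^{-1/2} ‖G E_V[0, t⁻¹]‖_{HS} < ∞`, then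
`sup_{t>0} φ(t)^{-1/2} ‖G (1 + tV)⁻¹‖_{HS} < ∞`. -/
theorem strongly_modulated_of_spectrally_modulated
    {H : Type*} [NormedAddCommGroup H] [InnerProductSpace ℂ H] [CompleteSpace H]
    (φ : ℝ → ℝ) (hφpos : ∀ t, 0 ≤ t → 0 < φ t)
    (hφdec : ∀ s t, 0 ≤ s → s ≤ t → φ t ≤ φ s)
    (hφrv : ∀ l : ℝ, 0 < l →
      Tendsto (fun t => φ (l * t) / φ t) atTop (nhds l⁻¹))
    (V : H →L[ℂ] H) (hV : V.IsPositive)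
    (E : ℝ → (H →L[ℂ] H))
    -- `E s` is the spectral projection `E_V[0,s]` of `V`:
    (hEsa : ∀ s : ℝ, 0 ≤ s → IsSelfAdjoint (E s))
    (hEproj : ∀ s : ℝ, 0 ≤ s → (E s).comp (E s) = E s)
    (hEV : ∀ s : ℝ, 0 ≤ s → (E s).comp V = V.comp (E s))
    (hVE : ∀ s : ℝ, 0 ≤ s → ‖V.comp (E s)‖ ≤ s)
    (hcompl : ∀ s : ℝ, 0 ≤ s → ∀ x : H, E s x = 0 → s * ‖x‖ ^ 2 ≤ (⟪V x, x⟫_ℂ).re)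
    -- `R t` is the resolvent `(1 + t V)⁻¹`:
    (R : ℝ → (H →L[ℂ] H))
    (hR : ∀ t > (0:ℝ), (1 + (t : ℂ) • V).comp (R t) = 1 ∧
      (R t).comp (1 + (t : ℂ) • V) = 1)
    (G : H →L[ℂ] H) (hG : Summable (fun k => approxNum G k ^ 2))
    (hspec : ∃ K₀ : ℝ, ∀ t > (0:ℝ),
      hsNorm (G.comp (E t⁻¹)) ≤ K₀ * Real.sqrt (φ t)) :
    ∃ K : ℝ, ∀ t > (0:ℝ), hsNorm (G.comp (R t)) ≤ K * Real.sqrt (φ t) :=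
  strongly_modulated_of_spectrally_modulated_general φ hφpos hφdec hφrv V hV E hEsa hEproj hEV
    hcompl R hR G hG hspec
end
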